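/- arXiv:1202.6381 — 6 statements merged into one kernel-verified Lean document; each statement's English description precedes it below -/
import Mathlib

section
/- Let a, b, c, d ∈ W satisfy φ_W(φ_W(a)) = a, φ_W(φ_W(b)) = b, φ_W(φ_W(c)) = c, φ_W(φ_W(d)) = d, and write a' = φ_W(a), b' = φ_W(b), c' = φ_W(c), d' = φ_W(d). In the ring of 2×2 matrices over W[[X]][1/p] define Y = [[a + f·c, p·b + f·(d − a) − g·c], [c, d − f·c]] and Z = [[d' − f(X^p)·c', p·c'], [b' + p⁻¹·(f(X^p)·(d' − a') − g(X^p)·c'), a' + f(X^p)·c']]. Then Y·[[X, p], [1, 0]] = [[X, p], [1, 0]]·φ(Z) and Z·[[0, p], [1, 0]] = [[0, p], [1, 0]]·φ(Y). (This says that the explicit matrices of §3.2 solve the window-lifting recursion for deforming endomorphisms along the vertical component.) -/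
noncomputable section

/-- The power series `f = ∑_{n≥0} X^{p^{2n}} ∈ ℤ[[X]]` (for `p ≥ 2` the exponents `p^{2n}`
are pairwise distinct, so the coefficient of `X^k` is `1` if `k = p^{2n}` for some `n`,
and `0` otherwise). -/
def fSeries (p : ℕ) : PowerSeries ℤ :=
  PowerSeries.mk fun k => open Classical in if ∃ n : ℕ, k = p ^ (2 * n) then 1 else 0

/-- The power series `g = ∑_{m≥0} X^{p^{2m}}·(X^{p^{2m}} + 2·∑_{0≤i<m} X^{p^{2i}}) ∈ ℤ[[X]]`:
its coefficient of `X^k` is `1` if `k = 2·p^{2m}` for some `m`, plus `2` if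
`k = p^{2m} + p^{2i}` for some `i < m` (for `p ≥ 2` these exponents are pairwise distinct). -/
def gSeries (p : ℕ) : PowerSeries ℤ :=
  PowerSeries.mk fun k => open Classical in
    (if ∃ m : ℕ, k = 2 * p ^ (2 * m) then 1 else 0) +
      (if ∃ m i : ℕ, i < m ∧ k = p ^ (2 * m) + p ^ (2 * i) then 2 else 0)

/-- `𝔽 = 𝔽_p^alg`, an algebraic closure of the field with `p` elements. -/
abbrev Fbar (p : ℕ) [Fact p.Prime] : Type := AlgebraicClosure (ZMod p)

/-- `W = W(𝔽)`, the ring of Witt vectors of `𝔽`. -/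
abbrev W (p : ℕ) [Fact p.Prime] : Type := WittVector p (Fbar p)

/-- `φ_W : W → W`, the Witt vector Frobenius. -/
abbrev phiW (p : ℕ) [Fact p.Prime] : W p →+* W p := WittVector.frobenius

/-- `W[[X]][1/p]`, the localization of `W[[X]]` away from `p`. -/
abbrev L (p : ℕ) [Fact p.Prime] : Type := Localization.Away ((p : PowerSeries (W p)))

/-- The canonical map `W[[X]] → W[[X]][1/p]`. -/
abbrev iota (p : ℕ) [Fact p.Prime] : PowerSeries (W p) →+* L p := algebraMap _ _

/-- The image of `f` in `W[[X]]`. -/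
def fW (p : ℕ) [Fact p.Prime] : PowerSeries (W p) :=
  PowerSeries.map (Int.castRingHom _) (fSeries p)

/-- The image of `g` in `W[[X]]`. -/
def gW (p : ℕ) [Fact p.Prime] : PowerSeries (W p) :=
  PowerSeries.map (Int.castRingHom _) (gSeries p)

/-- The matrix `Y = [[a + f·c, p·b + f·(d − a) − g·c], [c, d − f·c]]` over `W[[X]][1/p]`. -/
def Ymat (p : ℕ) [Fact p.Prime] (a b c d : W p) : Matrix (Fin 2) (Fin 2) (L p) :=
  !![iota p (PowerSeries.C a + fW p * PowerSeries.C c),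
      iota p ((p : PowerSeries (W p)) * PowerSeries.C b +
        fW p * (PowerSeries.C d - PowerSeries.C a) - gW p * PowerSeries.C c);
    iota p (PowerSeries.C c),
      iota p (PowerSeries.C d - fW p * PowerSeries.C c)]

/-- The matrix `Z = [[d' − f(X^p)·c', p·c'],
[b' + p⁻¹·(f(X^p)·(d' − a') − g(X^p)·c'), a' + f(X^p)·c']]` over `W[[X]][1/p]`, where
`fXp = f(X^p)`, `gXp = g(X^p)` and `pinv = p⁻¹`. -/
def Zmat (p : ℕ) [Fact p.Prime] (fXp gXp : PowerSeries (W p)) (pinv : L p)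
    (a' b' c' d' : W p) : Matrix (Fin 2) (Fin 2) (L p) :=
  !![iota p (PowerSeries.C d' - fXp * PowerSeries.C c'),
      iota p ((p : PowerSeries (W p)) * PowerSeries.C c');
    iota p (PowerSeries.C b') +
        pinv * iota p (fXp * (PowerSeries.C d' - PowerSeries.C a') -
          gXp * PowerSeries.C c'),
      iota p (PowerSeries.C a' + fXp * PowerSeries.C c')]

/-!
The coefficients of `f` and `g` are integers, hence fixed by `φ_W`, so `φ` acts on them as the
substitution `X ↦ X^p`: `φ(f) = f(X^p)` and `φ(f(X^p)) = f(X^{p²})`, and likewise for `g`. The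
exponents of `f` are the powers of `q = p²`, which gives `f(X^q) = f - X`; and `g = f²` (its two
kinds of terms are the diagonal and off-diagonal products `X^{q^m} X^{q^i}`), which explains
`g(X^q) = (f - X)² = g - 2Xf + X²`. After these substitutions, together with `φ_W² = id` on
`a, b, c, d` and `φ(p⁻¹) = p⁻¹`, both matrix identities are identities in a commutative ring in
which `p` is invertible.
-/

namespace PowerSeries

variable {R : Type*} [CommRing R]

theorem eq_expand_of_coeff {p : ℕ} (hp : p ≠ 0) {F G : R⟦X⟧}
    (hmul : ∀ k, coeff (p * k) G = coeff k F) (hndvd : ∀ k, ¬ p ∣ k → coeff k G = 0) :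
    G = expand p hp F := by
  ext k
  rw [coeff_expand]
  split_ifs with h
  · obtain ⟨m, rfl⟩ := h
    rw [hmul, Nat.mul_div_cancel_left _ (Nat.pos_of_ne_zero hp)]
  · exact hndvd k h

theorem expand_expand (p : ℕ) (hp : p ≠ 0) (F : R⟦X⟧) :
    expand p hp (expand p hp F) = expand (p ^ 2) (pow_ne_zero 2 hp) F := by
  rw [← expand_mul]
  simp only [sq]

theorem map_map_intCast (σ : R →+* R) (F : ℤ⟦X⟧) :
    map σ (map (Int.castRingHom R) F) = map (Int.castRingHom R) F := by
  ext
  simp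

section FrobeniusLift

variable {p : ℕ} (hp : p ≠ 0) {σ : R →+* R} {Φ : R⟦X⟧ →+* R⟦X⟧}

theorem eq_expand_map_of_coeff (hΦ₁ : ∀ F k, coeff (p * k) (Φ F) = σ (coeff k F))
    (hΦ₂ : ∀ F k, ¬ p ∣ k → coeff k (Φ F) = 0) (F : R⟦X⟧) :
    Φ F = expand p hp (map σ F) :=
  eq_expand_of_coeff hp (fun k => by rw [hΦ₁, coeff_map]) (hΦ₂ F)

theorem apply_map_intCast (hΦ₁ : ∀ F k, coeff (p * k) (Φ F) = σ (coeff k F))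
    (hΦ₂ : ∀ F k, ¬ p ∣ k → coeff k (Φ F) = 0) (F : ℤ⟦X⟧) :
    Φ (map (Int.castRingHom R) F) = expand p hp (map (Int.castRingHom R) F) := by
  rw [eq_expand_map_of_coeff hp hΦ₁ hΦ₂, map_map_intCast]

theorem apply_expand_map_intCast (hΦ₁ : ∀ F k, coeff (p * k) (Φ F) = σ (coeff k F))
    (hΦ₂ : ∀ F k, ¬ p ∣ k → coeff k (Φ F) = 0) (F : ℤ⟦X⟧) :
    Φ (expand p hp (map (Int.castRingHom R) F)) =
      map (Int.castRingHom R) (expand (p ^ 2) (pow_ne_zero 2 hp) F) := by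
  rw [eq_expand_map_of_coeff hp hΦ₁ hΦ₂, map_expand, map_map_intCast, expand_expand, map_expand]

end FrobeniusLift

end PowerSeries

open PowerSeries

theorem apply_eq_self_of_mul_eq_one {M F : Type*} [CommMonoid M] [FunLike F M M]
    [MonoidHomClass F M M] (σ : F) {u v : M} (hu : σ u = u) (huv : u * v = 1) : σ v = v := by
  have h : u * σ v = 1 := by rw [← hu, ← map_mul, huv, map_one]
  exact (left_inv_eq_right_inv (by rwa [mul_comm] at huv) h).symm

section LacunaryExponents

variable {q : ℕ}

theorem exists_mul_eq_mul_pow_iff (hq : q ≠ 0) {c : ℕ} (hc : ¬ q ∣ c) (m : ℕ) :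
    (∃ n, q * m = c * q ^ n) ↔ ∃ n, m = c * q ^ n := by
  constructor
  · rintro ⟨_ | n, h⟩
    · exact absurd ⟨m, by simpa using h.symm⟩ hc
    · exact ⟨n, mul_left_cancel₀ hq (by rw [h]; ring)⟩
  · rintro ⟨n, rfl⟩
    exact ⟨n + 1, by ring⟩

theorem exists_eq_mul_pow_iff_of_not_dvd {c k : ℕ} (hk : ¬ q ∣ k) :
    (∃ n, k = c * q ^ n) ↔ k = c := by
  constructor
  · rintro ⟨_ | n, rfl⟩
    · simp
    · exact absurd ⟨c * q ^ n, by ring⟩ hk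
  · rintro rfl
    exact ⟨0, by simp⟩

theorem exists_mul_eq_pow_add_pow_iff (hq : 1 < q) (m : ℕ) :
    (∃ n i, i < n ∧ q * m = q ^ n + q ^ i) ↔ ∃ n i, i < n ∧ m = q ^ n + q ^ i := by
  constructor
  · rintro ⟨n, _ | i, hi, h⟩
    · have h1 : q ∣ 1 :=
        (Nat.dvd_add_right (dvd_pow_self q hi.ne')).mp ⟨m, by simpa using h.symm⟩
      exact absurd h1 (Nat.not_dvd_of_pos_of_lt one_pos hq)
    · obtain ⟨n, rfl⟩ : ∃ n', n = n' + 1 := ⟨n - 1, by omega⟩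
      refine ⟨n, i, by omega, mul_left_cancel₀ (show q ≠ 0 by omega) ?_⟩
      rw [h]; ring
  · rintro ⟨n, i, hi, rfl⟩
    exact ⟨n + 1, i + 1, by omega, by ring⟩

theorem exists_eq_pow_add_pow_iff_of_not_dvd (hq : 1 < q) {k : ℕ} (hk : ¬ q ∣ k) :
    (∃ n i, i < n ∧ k = q ^ n + q ^ i) ↔ (∃ n, k = q ^ n + 1) ∧ k ≠ 2 := by
  constructor
  · rintro ⟨n, _ | i, hi, rfl⟩
    · have : q ≤ q ^ n := Nat.le_self_pow (by omega) q
      exact ⟨⟨n, by simp⟩, by rw [pow_zero]; omega⟩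
    · exact absurd (Nat.dvd_add (dvd_pow_self q (by omega)) (dvd_pow_self q (by omega))) hk
  · rintro ⟨⟨_ | n, rfl⟩, hk2⟩
    · simp at hk2
    · exact ⟨n + 1, 0, by omega, by simp⟩

theorem not_dvd_pow_add_one (hq : 3 ≤ q) (n : ℕ) : ¬ q ∣ q ^ n + 1 := by
  rcases n with _ | n
  · simpa using Nat.not_dvd_of_pos_of_lt two_pos (by omega : 2 < q)
  · rw [Nat.dvd_add_right (dvd_pow_self q n.succ_ne_zero)]
    exact Nat.not_dvd_of_pos_of_lt one_pos (by omega)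

end LacunaryExponents

theorem expand_fSeries {p : ℕ} (hp : 1 < p) :
    expand (p ^ 2) (pow_ne_zero 2 (by omega)) (fSeries p) = fSeries p - X := by
  classical
  have hq : 1 < p ^ 2 := Nat.one_lt_pow two_ne_zero hp
  have hq1 : ¬ p ^ 2 ∣ 1 := Nat.not_dvd_of_pos_of_lt one_pos hq
  ext k
  simp only [coeff_expand, map_sub, coeff_X, fSeries, coeff_mk]
  by_cases hk : p ^ 2 ∣ k
  · obtain ⟨m, rfl⟩ := hk
    have h := exists_mul_eq_mul_pow_iff (by omega) hq1 m
    simp only [one_mul, ← pow_mul] at h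
    have h1 : p ^ 2 * m ≠ 1 := fun h1 => hq1 ⟨m, h1.symm⟩
    rw [if_pos (dvd_mul_right _ _), Nat.mul_div_cancel_left m (by omega)]
    simp only [h, if_neg h1, sub_zero]
  · have h := exists_eq_mul_pow_iff_of_not_dvd (c := 1) hk
    simp only [one_mul, ← pow_mul] at h
    simp [hk, h]

open Classical in
theorem coeff_X_mul_fSeries (p k : ℕ) :
    coeff k (X * fSeries p) = if ∃ n, k = p ^ (2 * n) + 1 then 1 else 0 := by
  rcases k with _ | k
  · simp
  · simp [coeff_succ_X_mul, fSeries]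

theorem expand_gSeries {p : ℕ} (hp : 1 < p) :
    expand (p ^ 2) (pow_ne_zero 2 (by omega)) (gSeries p) =
      gSeries p - 2 * X * fSeries p + X ^ 2 := by
  classical
  have hq : 3 ≤ p ^ 2 := by nlinarith
  have hq2 : ¬ p ^ 2 ∣ 2 := Nat.not_dvd_of_pos_of_lt two_pos (by omega)
  ext k
  rw [mul_assoc, two_mul]
  simp only [coeff_expand, map_sub, map_add, coeff_X_pow, coeff_X_mul_fSeries, gSeries, coeff_mk]
  by_cases hk : p ^ 2 ∣ k
  · obtain ⟨m, rfl⟩ := hk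
    have hD := exists_mul_eq_mul_pow_iff (by omega) hq2 m
    have hT := exists_mul_eq_pow_add_pow_iff (q := p ^ 2) (by omega) m
    simp only [← pow_mul] at hD hT
    have hB : ¬ ∃ n, p ^ 2 * m = p ^ (2 * n) + 1 := by
      rintro ⟨n, h⟩
      exact not_dvd_pow_add_one hq n (by rw [← pow_mul, ← h]; exact dvd_mul_right _ _)
    have h2 : p ^ 2 * m ≠ 2 := fun h => hq2 ⟨m, h.symm⟩
    rw [if_pos (dvd_mul_right _ _), Nat.mul_div_cancel_left m (by omega)]
    simp only [hD, hT, hB, h2, if_false]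
    ring
  · have hD := exists_eq_mul_pow_iff_of_not_dvd (c := 2) hk
    have hT := exists_eq_pow_add_pow_iff_of_not_dvd (by omega) hk
    simp only [← pow_mul] at hD hT
    have hB : k = 2 → ∃ n, k = p ^ (2 * n) + 1 := fun h => ⟨0, by simp [h]⟩
    simp only [hD, hT, if_neg hk]
    split_ifs <;> simp_all

section WindowIdentities

variable {A : Type*} [CommRing A]

/- In these identities `ι` stands for `p⁻¹`. In the first, the right-hand factor is `φ(Z)` after
substituting `φ(f(X^p)) = f - X` and `φ(g(X^p)) = g - 2Xf + X²`; in the second, `f` and `g`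
stand for `f(X^p)` and `g(X^p)`, and the right-hand factor is `φ(Y)`. -/

theorem Y_window_identity (x π ι a b c d f g : A) (hι : π * ι = 1) :
    !![a + f * c, π * b + f * (d - a) - g * c; c, d - f * c] * !![x, π; 1, 0] =
      !![x, π; 1, 0] * !![d - (f - x) * c, π * c;
        b + ι * ((f - x) * (d - a) - (g - 2 * x * f + x ^ 2) * c), a + (f - x) * c] := by
  simp only [Matrix.mul_fin_two, EmbeddingLike.apply_eq_iff_eq, Matrix.vecCons_inj, and_true]
  refine ⟨⟨?_, ?_⟩, ?_, ?_⟩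
  · linear_combination (-((f - x) * (d - a) - (g - 2 * x * f + x ^ 2) * c)) * hι
  all_goals ring

theorem Z_window_identity (π ι a b c d f g : A) (hι : π * ι = 1) :
    !![d - f * c, π * c; b + ι * (f * (d - a) - g * c), a + f * c] * !![0, π; 1, 0] =
      !![0, π; 1, 0] * !![a + f * c, π * b + f * (d - a) - g * c; c, d - f * c] := by
  simp only [Matrix.mul_fin_two, EmbeddingLike.apply_eq_iff_eq, Matrix.vecCons_inj, and_true]
  refine ⟨⟨?_, ?_⟩, ?_, ?_⟩
  · ring
  · ring
  · ring
  · linear_combination (f * (d - a) - g * c) * hι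

end WindowIdentities

/-- Let `a, b, c, d ∈ W` be fixed by `φ_W²`, let `Y` and `Z` be the explicit
matrices of §3.2 of the paper (built from `f`, `g`, `f(X^p)`, `g(X^p)` and
`a' = φ_W(a)`, …, `d' = φ_W(d)`), and let `φ` be the ring endomorphism of `W[[X]]` acting as
`φ_W` on coefficients and sending `X` to `X^p` (characterized by its effect on coefficients),
together with its unique extension `φ_L` to `W[[X]][1/p]`.  Then
`Y·[[X, p], [1, 0]] = [[X, p], [1, 0]]·φ(Z)` and `Z·[[0, p], [1, 0]] = [[0, p], [1, 0]]·φ(Y)`,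
`φ` being applied to matrices entrywise. -/
theorem statement_0 (p : ℕ) [Fact p.Prime]
    (a b c d : W p)
    (ha : phiW p (phiW p a) = a) (hb : phiW p (phiW p b) = b)
    (hc : phiW p (phiW p c) = c) (hd : phiW p (phiW p d) = d)
    -- `Φ` is the ring endomorphism `φ` of `W[[X]]`, `F(X) ↦ F^{φ_W}(X^p)`:
    (Φ : PowerSeries (W p) →+* PowerSeries (W p))
    (hΦ₁ : ∀ (F : PowerSeries (W p)) (k : ℕ),
      PowerSeries.coeff (p * k) (Φ F) = phiW p (PowerSeries.coeff k F))
    (hΦ₂ : ∀ (F : PowerSeries (W p)) (k : ℕ), ¬ p ∣ k → PowerSeries.coeff k (Φ F) = 0)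
    -- `ΦL` is the unique extension of `φ` to the localization `W[[X]][1/p]`:
    (ΦL : L p →+* L p)
    (hΦL : ∀ F : PowerSeries (W p), ΦL (iota p F) = iota p (Φ F))
    -- `pinv` is the inverse `p⁻¹` in `W[[X]][1/p]`:
    (pinv : L p) (hpinv : iota p ((p : PowerSeries (W p))) * pinv = 1)
    -- `fXp = f(X^p)` and `gXp = g(X^p)`, the substitutions `X ↦ X^p` in `f` and `g`:
    (fXp gXp : PowerSeries (W p))
    (hfXp₁ : ∀ k : ℕ, PowerSeries.coeff (p * k) fXp = PowerSeries.coeff k (fW p))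
    (hfXp₂ : ∀ k : ℕ, ¬ p ∣ k → PowerSeries.coeff k fXp = 0)
    (hgXp₁ : ∀ k : ℕ, PowerSeries.coeff (p * k) gXp = PowerSeries.coeff k (gW p))
    (hgXp₂ : ∀ k : ℕ, ¬ p ∣ k → PowerSeries.coeff k gXp = 0) :
    Ymat p a b c d * !![iota p PowerSeries.X, iota p ((p : PowerSeries (W p))); 1, 0] =
      !![iota p PowerSeries.X, iota p ((p : PowerSeries (W p))); 1, 0] *
        (Zmat p fXp gXp pinv (phiW p a) (phiW p b) (phiW p c) (phiW p d)).map ⇑ΦL ∧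
    Zmat p fXp gXp pinv (phiW p a) (phiW p b) (phiW p c) (phiW p d) *
        !![0, iota p ((p : PowerSeries (W p))); 1, 0] =
      !![0, iota p ((p : PowerSeries (W p))); 1, 0] * (Ymat p a b c d).map ⇑ΦL := by
  have hp : 1 < p := (Fact.out : p.Prime).one_lt
  have hp0 : p ≠ 0 := by omega
  have hΦC (x : W p) : Φ (C x) = C (phiW p x) := by
    rw [eq_expand_map_of_coeff hp0 hΦ₁ hΦ₂, map_C, expand_C]
  have hfXp : fXp = expand p hp0 (fW p) := eq_expand_of_coeff hp0 hfXp₁ hfXp₂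
  have hgXp : gXp = expand p hp0 (gW p) := eq_expand_of_coeff hp0 hgXp₁ hgXp₂
  have hΦf : Φ (fW p) = fXp := (apply_map_intCast hp0 hΦ₁ hΦ₂ _).trans hfXp.symm
  have hΦg : Φ (gW p) = gXp := (apply_map_intCast hp0 hΦ₁ hΦ₂ _).trans hgXp.symm
  have hΦfXp : Φ fXp = fW p - X := by
    rw [hfXp, fW, apply_expand_map_intCast hp0 hΦ₁ hΦ₂, expand_fSeries hp, map_sub, map_X]
  have hΦgXp : Φ gXp = gW p - 2 * X * fW p + X ^ 2 := by
    rw [hgXp, gW, apply_expand_map_intCast hp0 hΦ₁ hΦ₂, expand_gSeries hp]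
    simp only [map_sub, map_add, map_mul, map_pow, map_ofNat, map_X, fW]
  have hΦLpinv : ΦL pinv = pinv :=
    apply_eq_self_of_mul_eq_one ΦL (by rw [hΦL, map_natCast]) hpinv
  constructor
  · convert Y_window_identity (iota p X) (iota p p) pinv (iota p (C a)) (iota p (C b))
      (iota p (C c)) (iota p (C d)) (iota p (fW p)) (iota p (gW p)) hpinv using 2
    · ext i j
      fin_cases i <;> fin_cases j <;> simp [Ymat]
    · ext i j
      fin_cases i <;> fin_cases j <;>
        simp [Zmat, hΦL, hΦC, ha, hb, hc, hd, hΦfXp, hΦgXp, hΦLpinv, map_ofNat]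
  · convert Z_window_identity (iota p p) pinv (iota p (C (phiW p a))) (iota p (C (phiW p b)))
      (iota p (C (phiW p c))) (iota p (C (phiW p d))) (iota p fXp) (iota p gXp) hpinv using 2
    · ext i j
      fin_cases i <;> fin_cases j <;> simp [Zmat]
    · ext i j
      fin_cases i <;> fin_cases j <;> simp [Ymat, hΦL, hΦC, hΦf, hΦg]

end
end

section
/- Let a, b, c, d ∈ W satisfy φ_W(φ_W(a)) = a, φ_W(φ_W(b)) = b, φ_W(φ_W(c)) = c, φ_W(φ_W(d)) = d, and write a' = φ_W(a), b' = φ_W(b), c' = φ_W(c), d' = φ_W(d). In the ring of 2×2 matrices over W[[X]][1/p] define Y = [[a + f·c, p·b + f·(d − a) − g·c], [c, d − f·c]] and Z = [[d' − f(X^p)·c', p·c'], [b' + p⁻¹·(f(X^p)·(d' − a') − g(X^p)·c'), a' + f(X^p)·c']]. Then the following are equivalent: (i) every entry of Y and of Z lies in W[[X]], and the upper-right entries of Y and of Z lie in p·W[[X]]; (ii) a − d ∈ p·W and c ∈ p·W. (This is the integrality criterion for the lifted quasi-endomorphism in §3.2.) -/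
/-!
The upper-right entry of `Y` is `p·b + E` with `E = f·(d - a) - g·c`. Since `f = X + O(X⁴)` and
`g = X² + O(X³)`, the coefficients of `X` and `X²` in `E` are `d - a` and `-c`, so `p ∣ E` in
`W[[X]]` exactly when `p ∣ a - d` and `p ∣ c`. Conversely these divisibilities are preserved by
`φ_W`, which makes the one entry of `Z` carrying `p⁻¹` integral; all other entries are visibly
integral.
-/

noncomputable section

open PowerSeries

namespace PowerSeries

variable {R : Type*} [CommRing R]

theorem C_dvd_iff_dvd_coeff (r : R) (F : R⟦X⟧) : C r ∣ F ↔ ∀ n, r ∣ coeff n F := by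
  refine ⟨fun ⟨G, hG⟩ n => ⟨coeff n G, by rw [hG, coeff_C_mul]⟩, fun h => ?_⟩
  choose G hG using h
  exact ⟨mk G, ext fun n => by rw [coeff_C_mul, coeff_mk, hG]⟩

theorem C_dvd_mul_C_sub_mul_C (F G : R⟦X⟧) {r x y : R} (hx : r ∣ x) (hy : r ∣ y) :
    C r ∣ F * C x - G * C y :=
  dvd_sub (dvd_mul_of_dvd_right (map_dvd C hx) F) (dvd_mul_of_dvd_right (map_dvd C hy) G)

theorem C_dvd_mul_C_sub_mul_C_iff {F G : R⟦X⟧} (hF₁ : coeff 1 F = 1) (hG₁ : coeff 1 G = 0)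
    (hF₂ : coeff 2 F = 0) (hG₂ : coeff 2 G = 1) (r x y : R) :
    C r ∣ F * C x - G * C y ↔ r ∣ x ∧ r ∣ y := by
  refine ⟨fun h => ?_, fun ⟨hx, hy⟩ => C_dvd_mul_C_sub_mul_C F G hx hy⟩
  rw [C_dvd_iff_dvd_coeff] at h
  have h₁ := h 1
  have h₂ := h 2
  simp only [map_sub, coeff_mul_C, hF₁, hG₁, hF₂, hG₂, one_mul, zero_mul, sub_zero,
    zero_sub, dvd_neg] at h₁ h₂
  exact ⟨h₁, h₂⟩

end PowerSeries

theorem Nat.four_le_pow_two_mul {p n : ℕ} (hp : 2 ≤ p) (hn : 0 < n) : 4 ≤ p ^ (2 * n) :=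
  calc 4 = 2 ^ 2 := rfl
    _ ≤ p ^ 2 := Nat.pow_le_pow_left hp 2
    _ ≤ p ^ (2 * n) := Nat.pow_le_pow_right (by omega) (by omega)

section Witt

variable (p : ℕ) [Fact p.Prime]

theorem coeff_one_fW : coeff 1 (fW p) = 1 := by
  rw [fW, coeff_map, fSeries, coeff_mk, if_pos ⟨0, by simp⟩, map_one]

theorem coeff_two_fW : coeff 2 (fW p) = 0 := by
  have hp := (Fact.out : p.Prime).two_le
  rw [fW, coeff_map, fSeries, coeff_mk, if_neg, map_zero]
  rintro ⟨n, hn⟩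
  rcases Nat.eq_zero_or_pos n with rfl | hn₀
  · simp at hn
  · have := Nat.four_le_pow_two_mul hp hn₀
    omega

theorem coeff_one_gW : coeff 1 (gW p) = 0 := by
  have hp := (Fact.out : p.Prime).pos
  rw [gW, coeff_map, gSeries, coeff_mk, if_neg, if_neg, add_zero, map_zero]
  · rintro ⟨m, i, -, h⟩
    have := Nat.pow_pos (n := 2 * m) hp
    have := Nat.pow_pos (n := 2 * i) hp
    omega
  · rintro ⟨m, h⟩
    have := Nat.pow_pos (n := 2 * m) hp
    omega

theorem coeff_two_gW : coeff 2 (gW p) = 1 := by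
  have hp := (Fact.out : p.Prime).two_le
  rw [gW, coeff_map, gSeries, coeff_mk, if_pos ⟨0, by simp⟩, if_neg, add_zero, map_one]
  rintro ⟨m, i, him, h⟩
  have := Nat.four_le_pow_two_mul hp (show 0 < m by omega)
  omega

theorem natCast_dvd_fW_mul_sub_gW_mul_iff (a c d : W p) :
    (p : (W p)⟦X⟧) ∣ fW p * (C d - C a) - gW p * C c ↔ (p : W p) ∣ a - d ∧ (p : W p) ∣ c := by
  rw [← map_natCast C, ← map_sub, C_dvd_mul_C_sub_mul_C_iff (coeff_one_fW p) (coeff_one_gW p)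
    (coeff_two_fW p) (coeff_two_gW p), dvd_sub_comm]

theorem iota_injective : Function.Injective (iota p) := by
  have hp : (p : (W p)⟦X⟧) ≠ 0 := by
    rw [← map_natCast C]
    exact (map_ne_zero_iff _ C_injective).2 (WittVector.p_nonzero p _)
  exact IsLocalization.injective (L p) (powers_le_nonZeroDivisors_of_noZeroDivisors hp)

theorem exists_Ymat_zero_one_eq_iff (a b c d : W p) :
    (∃ u, Ymat p a b c d 0 1 = iota p (p * u)) ↔
      (p : (W p)⟦X⟧) ∣ fW p * (C d - C a) - gW p * C c := by
  simp only [Ymat, Matrix.of_apply, Matrix.cons_val', Matrix.cons_val_zero, Matrix.cons_val_one,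
    Matrix.empty_val', Matrix.cons_val_fin_one, (iota_injective p).eq_iff, add_sub_assoc]
  rw [← dvd_add_right (dvd_mul_right (p : (W p)⟦X⟧) (C b))]
  rfl

theorem Ymat_apply_mem_range (a b c d : W p) (i j : Fin 2) :
    Ymat p a b c d i j ∈ Set.range (iota p) := by
  fin_cases i <;> fin_cases j <;> exact ⟨_, rfl⟩

theorem Zmat_apply_mem_range {fXp gXp : (W p)⟦X⟧} {pinv : L p}
    (hpinv : iota p p * pinv = 1) {a' b' c' d' : W p}
    (h : (p : (W p)⟦X⟧) ∣ fXp * (C d' - C a') - gXp * C c') (i j : Fin 2) :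
    Zmat p fXp gXp pinv a' b' c' d' i j ∈ Set.range (iota p) := by
  obtain ⟨e, he⟩ := h
  fin_cases i <;> fin_cases j
  · exact ⟨_, rfl⟩
  · exact ⟨_, rfl⟩
  · refine ⟨C b' + e, ?_⟩
    change _ = iota p (C b') + pinv * iota p (fXp * (C d' - C a') - gXp * C c')
    rw [he, map_add, map_mul, ← mul_assoc, mul_comm pinv, hpinv, one_mul]
  · exact ⟨_, rfl⟩

end Witt

theorem statement_1_general (p : ℕ) [Fact p.Prime]
    (a b c d : W p)
    -- `pinv` is the inverse `p⁻¹` in `W[[X]][1/p]`: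
    (pinv : L p) (hpinv : iota p ((p : PowerSeries (W p))) * pinv = 1)
    -- `fXp = f(X^p)` and `gXp = g(X^p)`, the substitutions `X ↦ X^p` in `f` and `g`:
    (fXp gXp : PowerSeries (W p)) :
    ((∀ i j, Ymat p a b c d i j ∈ Set.range (iota p)) ∧
      (∀ i j, Zmat p fXp gXp pinv (phiW p a) (phiW p b) (phiW p c) (phiW p d) i j ∈
        Set.range (iota p)) ∧
      (∃ u : PowerSeries (W p), Ymat p a b c d 0 1 = iota p ((p : PowerSeries (W p)) * u)) ∧
      (∃ v : PowerSeries (W p),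
        Zmat p fXp gXp pinv (phiW p a) (phiW p b) (phiW p c) (phiW p d) 0 1 =
          iota p ((p : PowerSeries (W p)) * v))) ↔
      ((p : W p) ∣ (a - d) ∧ (p : W p) ∣ c) := by
  have hφ (x : W p) (hx : (p : W p) ∣ x) : (p : W p) ∣ phiW p x :=
    map_natCast (phiW p) p ▸ map_dvd (phiW p) hx
  constructor
  · rintro ⟨-, -, hY, -⟩
    exact (natCast_dvd_fW_mul_sub_gW_mul_iff p a c d).1
      ((exists_Ymat_zero_one_eq_iff p a b c d).1 hY)
  · rintro ⟨had, hc⟩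
    refine ⟨Ymat_apply_mem_range p a b c d, Zmat_apply_mem_range p hpinv ?_,
      (exists_Ymat_zero_one_eq_iff p a b c d).2
        ((natCast_dvd_fW_mul_sub_gW_mul_iff p a c d).2 ⟨had, hc⟩), C (phiW p c), rfl⟩
    rw [← map_natCast C, ← map_sub, ← map_sub]
    exact C_dvd_mul_C_sub_mul_C fXp gXp (hφ _ (dvd_sub_comm.1 had)) (hφ c hc)

/-- With `Y` and `Z` the explicit matrices of §3.2 of the paper (built from
`f`, `g`, `f(X^p)`, `g(X^p)` and `a' = φ_W(a)`, …, `d' = φ_W(d)`, for `a, b, c, d ∈ W` fixed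
by `φ_W²`), the following are equivalent: (i) every entry of `Y` and of `Z` lies in `W[[X]]`
and the upper-right entries of `Y` and of `Z` lie in `p·W[[X]]`; (ii) `a − d ∈ p·W` and
`c ∈ p·W`. -/
theorem statement_1 (p : ℕ) [Fact p.Prime]
    (a b c d : W p)
    (ha : phiW p (phiW p a) = a) (hb : phiW p (phiW p b) = b)
    (hc : phiW p (phiW p c) = c) (hd : phiW p (phiW p d) = d)
    -- `pinv` is the inverse `p⁻¹` in `W[[X]][1/p]`:
    (pinv : L p) (hpinv : iota p ((p : PowerSeries (W p))) * pinv = 1)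
    -- `fXp = f(X^p)` and `gXp = g(X^p)`, the substitutions `X ↦ X^p` in `f` and `g`:
    (fXp gXp : PowerSeries (W p))
    (hfXp₁ : ∀ k : ℕ, PowerSeries.coeff (p * k) fXp = PowerSeries.coeff k (fW p))
    (hfXp₂ : ∀ k : ℕ, ¬ p ∣ k → PowerSeries.coeff k fXp = 0)
    (hgXp₁ : ∀ k : ℕ, PowerSeries.coeff (p * k) gXp = PowerSeries.coeff k (gW p))
    (hgXp₂ : ∀ k : ℕ, ¬ p ∣ k → PowerSeries.coeff k gXp = 0) :
    ((∀ i j, Ymat p a b c d i j ∈ Set.range (iota p)) ∧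
      (∀ i j, Zmat p fXp gXp pinv (phiW p a) (phiW p b) (phiW p c) (phiW p d) i j ∈
        Set.range (iota p)) ∧
      (∃ u : PowerSeries (W p), Ymat p a b c d 0 1 = iota p ((p : PowerSeries (W p)) * u)) ∧
      (∃ v : PowerSeries (W p),
        Zmat p fXp gXp pinv (phiW p a) (phiW p b) (phiW p c) (phiW p d) 0 1 =
          iota p ((p : PowerSeries (W p)) * v))) ↔
      ((p : W p) ∣ (a - d) ∧ (p : W p) ∣ c) :=
  statement_1_general p a b c d pinv hpinv fXp gXp

end
end

section
/- Let u ∈ W satisfy φ_W(φ_W(u)) = u, set ū = φ_W(u) and U = u − ū. In the ring of 2×2 matrices over W[[X₁,X₂]][1/p] set Y₀ = [[u, −U·f(X₁)], [0, ū]] and Z₀ = [[u, 0], [p⁻¹·U·f(X₁^p), ū]], and define Y[1] = p⁻¹·[[X₁, p], [1, 0]]·φ(Z₀)·[[0, p], [1, −X₁]] and Z[1] = p⁻¹·[[X₂, p], [1, 0]]·φ(Y₀)·[[0, p], [1, −X₂]]. Then Y[1] = Y₀ and p·(Z[1] − Z₀) = U·[[X₂·f(X₁^p), −p·X₂ − X₂²·f(X₁^p)],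 [0, −X₂·f(X₁^p)]]. (This is the explicit first step of the two-variable recursion in the unramified case of §3.3: Y₁ = 0 and Z₁ is as displayed.) -/
noncomputable section

/-- `W[[X₁,X₂]]`, the formal power series ring in two variables over `W`. -/
abbrev Mv (p : ℕ) [Fact p.Prime] : Type := MvPowerSeries (Fin 2) (W p)

/-- The constant-series embedding `W → W[[X₁,X₂]]`. -/
abbrev CMv (p : ℕ) [Fact p.Prime] : W p →+* Mv p := MvPowerSeries.C

/-- `G` is the evaluation `F(X₁^e)` of a one-variable integral power series `F` at `X₁^e`
inside `W[[X₁,X₂]]` (characterized by coefficients: the coefficient of `X₁^{e·k}` in `G` is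
the `k`-th coefficient of `F`, and all other coefficients of `G` vanish). -/
def IsEvalAtX1Pow (p : ℕ) [Fact p.Prime] (e : ℕ) (F : PowerSeries ℤ) (G : Mv p) : Prop :=
  (∀ k : ℕ, MvPowerSeries.coeff (Finsupp.single 0 (e * k)) G =
      ((PowerSeries.coeff k F : ℤ) : W p)) ∧
    (∀ d : Fin 2 →₀ ℕ, d 1 ≠ 0 → MvPowerSeries.coeff d G = 0) ∧
    (∀ k : ℕ, ¬ e ∣ k → MvPowerSeries.coeff (Finsupp.single 0 k) G = 0)

/-- `W[[X₁,X₂]][1/p]`, the localization of `W[[X₁,X₂]]` away from `p`. -/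
abbrev L2 (p : ℕ) [Fact p.Prime] : Type := Localization.Away ((p : Mv p))

/-- The canonical map `W[[X₁,X₂]] → W[[X₁,X₂]][1/p]`. -/
abbrev iota2 (p : ℕ) [Fact p.Prime] : Mv p →+* L2 p := algebraMap _ _

/-!
The Frobenius lift `φ` fixes `p⁻¹`, swaps `u` and `ū` (as `φ_W² u = u`), sends `f(X₁)` to
`f(X₁^p)`, and sends `f(X₁^p)` to `f(X₁^{p²}) = f(X₁) − X₁`. After these substitutions both
identities are polynomial identities in a commutative ring containing `p` and `p⁻¹`.
-/

theorem map_eq_self_of_mul_eq_one {M F : Type*} [CommMonoid M] [FunLike F M M]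
    [MonoidHomClass F M M] (f : F) {q x : M} (hq : f q = q) (h : q * x = 1) : f x = x :=
  (left_inv_eq_right_inv (by rwa [mul_comm]) (by rw [← hq, ← map_mul, h, map_one])).symm

theorem Finsupp.exists_eq_single_of_single_eq_smul {ι : Type*} {n k : ℕ} {i : ι} {e : ι →₀ ℕ}
    (hn : n ≠ 0) (h : Finsupp.single i k = n • e) : ∃ j, k = n * j ∧ e = Finsupp.single i j := by
  have hk : k = n * e i := by simpa using congr($h i)
  refine ⟨e i, hk, smul_right_injective _ hn (?_ : n • e = n • Finsupp.single i (e i))⟩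
  rw [← h, hk, Finsupp.smul_single, smul_eq_mul]

theorem Finsupp.apply_one_ne_zero_or_eq_single (d : Fin 2 →₀ ℕ) :
    d 1 ≠ 0 ∨ d = Finsupp.single 0 (d 0) := by
  refine or_iff_not_imp_left.mpr fun hd => ?_
  ext i
  fin_cases i <;> simp_all

theorem Matrix.map_fin_two {α β : Type*} (f : α → β) (a b c d : α) :
    (!![a, b; c, d]).map f = !![f a, f b; f c, f d] := by
  ext i j
  fin_cases i <;> fin_cases j <;> rfl

namespace MvPowerSeries

variable {σ R : Type*} [CommSemiring R]

/-- The coefficientwise form of `Φ (∑ a_d X^d) = ∑ s(a_d) X^(n • d)`. -/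
def IsFrobeniusLift (n : ℕ) (s : R →+* R) (Φ : MvPowerSeries σ R →+* MvPowerSeries σ R) :
    Prop :=
  (∀ F d, coeff (n • d) (Φ F) = s (coeff d F)) ∧
    ∀ F d, (¬ ∃ e : σ →₀ ℕ, d = n • e) → coeff d (Φ F) = 0

theorem IsFrobeniusLift.map_C {n : ℕ} {s : R →+* R}
    {Φ : MvPowerSeries σ R →+* MvPowerSeries σ R} (hΦ : IsFrobeniusLift n s Φ) (hn : n ≠ 0)
    (a : R) : Φ (C a) = C (s a) := by
  classical
  ext d
  by_cases hd : ∃ e, d = n • e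
  · obtain ⟨e, rfl⟩ := hd
    rw [hΦ.1, coeff_C, coeff_C]
    by_cases he : e = 0
    · simp [he]
    · rw [if_neg he, if_neg (by simp [hn, he]), map_zero]
  · rw [hΦ.2 _ _ hd, coeff_C, if_neg]
    rintro rfl
    exact hd ⟨0, by simp⟩

end MvPowerSeries

open MvPowerSeries

section fSeries

variable {p : ℕ}

theorem fSeries_coeff_pow_two_mul (hp : 1 < p) (m : ℕ) :
    PowerSeries.coeff (p ^ 2 * m) (fSeries p) = PowerSeries.coeff m (fSeries p) := by
  have hiff : (∃ n, p ^ 2 * m = p ^ (2 * n)) ↔ ∃ n, m = p ^ (2 * n) := by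
    constructor
    · rintro ⟨_ | n, hn⟩
      · have : p ^ 2 = 1 := Nat.eq_one_of_mul_eq_one_right (by simpa using hn)
        nlinarith
      · exact ⟨n, Nat.eq_of_mul_eq_mul_left (by positivity : 0 < p ^ 2)
          (by rw [hn]; ring : p ^ 2 * m = p ^ 2 * p ^ (2 * n))⟩
    · rintro ⟨n, rfl⟩
      exact ⟨n + 1, by ring⟩
  simp only [fSeries, PowerSeries.coeff_mk]
  classical
  exact if_congr hiff rfl rfl

theorem fSeries_coeff_of_not_dvd {k : ℕ} (hk : ¬ p ^ 2 ∣ k) :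
    PowerSeries.coeff k (fSeries p) = if k = 1 then 1 else 0 := by
  have hiff : (∃ n, k = p ^ (2 * n)) ↔ k = 1 := by
    refine ⟨?_, fun h => ⟨0, by simp [h]⟩⟩
    rintro ⟨_ | n, rfl⟩
    · simp
    · exact absurd ⟨p ^ (2 * n), by ring⟩ hk
  simp only [fSeries, PowerSeries.coeff_mk]
  classical
  exact if_congr hiff rfl rfl

end fSeries

namespace IsEvalAtX1Pow

variable {p : ℕ} [Fact p.Prime] {e : ℕ} {F : PowerSeries ℤ} {G G' : Mv p}

theorem unique (hG : IsEvalAtX1Pow p e F G) (hG' : IsEvalAtX1Pow p e F G') : G = G' := by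
  ext d
  rcases d.apply_one_ne_zero_or_eq_single with hd | hd
  · rw [hG.2.1 d hd, hG'.2.1 d hd]
  · rw [hd]
    by_cases hk : e ∣ d 0
    · obtain ⟨j, hj⟩ := hk
      rw [hj, hG.1, hG'.1]
    · rw [hG.2.2 _ hk, hG'.2.2 _ hk]

theorem frobenius {Φ : Mv p →+* Mv p} (hΦ : IsFrobeniusLift p (phiW p) Φ)
    (hG : IsEvalAtX1Pow p e F G) : IsEvalAtX1Pow p (p * e) F (Φ G) := by
  refine ⟨fun k => ?_, fun d hd => ?_, fun k hk => ?_⟩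
  · rw [mul_assoc, ← smul_eq_mul, ← Finsupp.smul_single, hΦ.1, hG.1, map_intCast]
  · by_cases hde : ∃ e', d = p • e'
    · obtain ⟨e', rfl⟩ := hde
      rw [hΦ.1, hG.2.1 e' (by contrapose! hd; simp [hd]), map_zero]
    · exact hΦ.2 _ _ hde
  · by_cases hde : ∃ e' : Fin 2 →₀ ℕ, Finsupp.single 0 k = p • e'
    · obtain ⟨e', he'⟩ := hde
      obtain ⟨j, rfl, rfl⟩ :=
        Finsupp.exists_eq_single_of_single_eq_smul (Fact.out : p.Prime).ne_zero he'
      rw [← smul_eq_mul, ← Finsupp.smul_single, hΦ.1,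
        hG.2.2 j (fun h => hk (mul_dvd_mul_left p h)), map_zero]
    · exact hΦ.2 _ _ hde

theorem fSeries_sub_X (hG : IsEvalAtX1Pow p 1 (fSeries p) G) :
    IsEvalAtX1Pow p (p ^ 2) (fSeries p) (G - X 0) := by
  have hp : 1 < p := (Fact.out : p.Prime).one_lt
  have hG₁ (k : ℕ) := one_mul k ▸ hG.1 k
  refine ⟨fun k => ?_, fun d hd => ?_, fun k hk => ?_⟩
  · have hk : p ^ 2 * k ≠ 1 := fun h => by
      have : p ^ 2 = 1 := Nat.eq_one_of_mul_eq_one_right h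
      nlinarith
    rw [map_sub, hG₁, coeff_X, if_neg ((Finsupp.single_injective _).ne hk),
      fSeries_coeff_pow_two_mul hp, sub_zero]
  · rw [map_sub, hG.2.1 d hd, coeff_X, if_neg (by rintro rfl; simp at hd), sub_zero]
  · rw [map_sub, hG₁, coeff_X, fSeries_coeff_of_not_dvd hk]
    by_cases hk1 : k = 1
    · simp [hk1]
    · rw [if_neg hk1, if_neg ((Finsupp.single_injective _).ne hk1), Int.cast_zero, sub_zero]

end IsEvalAtX1Pow

section FirstStep

variable {R : Type*} [CommRing R] {q pinv : R}

theorem first_step_Y_eq (hpinv : q * pinv = 1) (a b f x : R) :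
    pinv • (!![x, q; 1, 0] * !![b, 0; pinv * ((b - a) * (f - x)), a] * !![0, q; 1, -x]) =
      !![a, -((a - b) * f); 0, b] := by
  ext i j
  fin_cases i <;> fin_cases j <;> simp
  · linear_combination a * hpinv
  · linear_combination ((b - a) * ((f - x) * (q * pinv) + f)) * hpinv
  · linear_combination b * hpinv

theorem first_step_Z_sub_eq (hpinv : q * pinv = 1) (a b f x : R) :
    q • (pinv • (!![x, q; 1, 0] * !![b, -((b - a) * f); 0, a] * !![0, q; 1, -x]) -
        !![a, 0; pinv * ((a - b) * f), b]) =
      !![(a - b) * (x * f), (a - b) * (-(q * x) - x ^ 2 * f); 0, (a - b) * (-(x * f))] := by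
  ext i j
  fin_cases i <;> fin_cases j <;> simp
  · linear_combination (x * (a - b) * f + q * a) * hpinv
  · linear_combination (q * x * b - x ^ 2 * (a - b) * f - q * x * a) * hpinv
  · ring
  · linear_combination (q * b - x * (a - b) * f) * hpinv

end FirstStep

/-- Let `u ∈ W` be fixed by `φ_W²`, `ū = φ_W(u)`, `U = u − ū`.  With
`Y₀ = [[u, −U·f(X₁)], [0, ū]]` and `Z₀ = [[u, 0], [p⁻¹·U·f(X₁^p), ū]]` over
`W[[X₁,X₂]][1/p]`, and
`Y[1] = p⁻¹·[[X₁, p], [1, 0]]·φ(Z₀)·[[0, p], [1, −X₁]]`,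
`Z[1] = p⁻¹·[[X₂, p], [1, 0]]·φ(Y₀)·[[0, p], [1, −X₂]]`
(where `φ` is the ring endomorphism of `W[[X₁,X₂]]` acting as `φ_W` on coefficients and
sending `Xᵢ` to `Xᵢ^p`, extended to the localization and applied entrywise), one has
`Y[1] = Y₀` and `p·(Z[1] − Z₀) = U·[[X₂·f(X₁^p), −p·X₂ − X₂²·f(X₁^p)], [0, −X₂·f(X₁^p)]]`. -/
theorem statement_3 (p : ℕ) [Fact p.Prime]
    (u : W p) (hu : phiW p (phiW p u) = u)
    -- `Φ` is the ring endomorphism `φ` of `W[[X₁,X₂]]` (characterized by coefficients):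
    (Φ : Mv p →+* Mv p)
    (hΦ₁ : ∀ (F : Mv p) (d : Fin 2 →₀ ℕ),
      MvPowerSeries.coeff (p • d) (Φ F) = phiW p (MvPowerSeries.coeff d F))
    (hΦ₂ : ∀ (F : Mv p) (d : Fin 2 →₀ ℕ),
      (¬ ∃ e : Fin 2 →₀ ℕ, d = p • e) → MvPowerSeries.coeff d (Φ F) = 0)
    -- `ΦL` is the unique extension of `φ` to `W[[X₁,X₂]][1/p]`:
    (ΦL : L2 p →+* L2 p)
    (hΦL : ∀ F : Mv p, ΦL (iota2 p F) = iota2 p (Φ F))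
    -- `pinv` is the inverse `p⁻¹` in `W[[X₁,X₂]][1/p]`:
    (pinv : L2 p) (hpinv : iota2 p ((p : Mv p)) * pinv = 1)
    -- `fX1 = f(X₁)` and `fX1p = f(X₁^p)`:
    (fX1 fX1p : Mv p)
    (hfX1 : IsEvalAtX1Pow p 1 (fSeries p) fX1)
    (hfX1p : IsEvalAtX1Pow p p (fSeries p) fX1p) :
    pinv • (!![iota2 p (MvPowerSeries.X 0), iota2 p ((p : Mv p)); 1, 0] *
          (!![iota2 p (CMv p u), 0;
              pinv * iota2 p (CMv p (u - phiW p u) * fX1p),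
              iota2 p (CMv p (phiW p u))]).map ⇑ΦL *
          !![0, iota2 p ((p : Mv p)); 1, -iota2 p (MvPowerSeries.X 0)]) =
      !![iota2 p (CMv p u), iota2 p (-(CMv p (u - phiW p u) * fX1));
          0, iota2 p (CMv p (phiW p u))] ∧
    iota2 p ((p : Mv p)) •
        (pinv • (!![iota2 p (MvPowerSeries.X 1), iota2 p ((p : Mv p)); 1, 0] *
            (!![iota2 p (CMv p u), iota2 p (-(CMv p (u - phiW p u) * fX1));
                0, iota2 p (CMv p (phiW p u))]).map ⇑ΦL *
            !![0, iota2 p ((p : Mv p)); 1, -iota2 p (MvPowerSeries.X 1)]) -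
          !![iota2 p (CMv p u), 0;
              pinv * iota2 p (CMv p (u - phiW p u) * fX1p),
              iota2 p (CMv p (phiW p u))]) =
      !![iota2 p (CMv p (u - phiW p u) * (MvPowerSeries.X 1 * fX1p)),
          iota2 p (CMv p (u - phiW p u) *
            (-((p : Mv p) * MvPowerSeries.X 1) - (MvPowerSeries.X 1) ^ 2 * fX1p));
          0, iota2 p (CMv p (u - phiW p u) * (-(MvPowerSeries.X 1 * fX1p)))] := by
  have hp : p ≠ 0 := (Fact.out : p.Prime).ne_zero
  have hΦ : IsFrobeniusLift p (phiW p) Φ := ⟨hΦ₁, hΦ₂⟩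
  have hΦfX1 : Φ fX1 = fX1p := (mul_one p ▸ hfX1.frobenius hΦ).unique hfX1p
  have hΦfX1p : Φ fX1p = fX1 - X 0 := (hfX1p.frobenius hΦ).unique (sq p ▸ hfX1.fSeries_sub_X)
  have hΦLpinv : ΦL pinv = pinv :=
    map_eq_self_of_mul_eq_one ΦL (by rw [hΦL, map_natCast]) hpinv
  simp only [Matrix.map_fin_two, map_mul, map_sub, map_neg, map_pow, map_zero,
    map_natCast, hΦL, hΦ.map_C hp, hΦfX1, hΦfX1p, hu, hΦLpinv] at hpinv ⊢
  exact ⟨first_step_Y_eq hpinv _ _ _ _, first_step_Z_sub_eq hpinv _ _ _ _⟩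

end
end

section
/- For every integer ℓ ≥ 1: if ℓ is odd then Y_ℓ = 0 and every entry of Z_ℓ is divisible by X₂^{p^{ℓ−1}} in W[[X₁,X₂]]; if ℓ is even then Z_ℓ = 0 and every entry of Y_ℓ is divisible by X₂^{p^{ℓ−1}} in W[[X₁,X₂]]. -/
noncomputable section

/-! Starting from `Y₁ = 0`, the recursion sends a zero matrix to a zero matrix, so `Y_ℓ` vanishes
for odd `ℓ` and `Z_ℓ` for even `ℓ`. The other matrix is obtained by applying `φ` and multiplying
by fixed matrices on both sides; multiplication cannot lower divisibility by a power of `X₂`, and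
`φ`, which only has coefficients at exponents `p • d`, multiplies the `X₂`-adic order by `p`.
Since every entry of `Z₁` is divisible by `X₂`, the order is at least `p^{ℓ-1}` at step `ℓ`. -/

namespace MvPowerSeries

variable {σ R S : Type*} [CommSemiring R] [CommSemiring S]

theorem X_pow_mul_dvd_of_coeff_nsmul {p m : ℕ} {s : σ} {ψ : R → S} (hψ : ψ 0 = 0)
    {Φ : MvPowerSeries σ R → MvPowerSeries σ S}
    (hΦ₁ : ∀ F d, coeff (p • d) (Φ F) = ψ (coeff d F))
    (hΦ₂ : ∀ F d, (¬ ∃ e, d = p • e) → coeff d (Φ F) = 0)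
    {F : MvPowerSeries σ R} (hF : (X s : MvPowerSeries σ R) ^ m ∣ F) :
    (X s : MvPowerSeries σ S) ^ (p * m) ∣ Φ F := by
  rw [X_pow_dvd_iff] at hF ⊢
  intro d hd
  by_cases hd' : ∃ e, d = p • e
  · obtain ⟨e, rfl⟩ := hd'
    have he : e s < m := lt_of_mul_lt_mul_left (by simpa using hd) (Nat.zero_le p)
    rw [hΦ₁, hF e he, hψ]
  · exact hΦ₂ F d hd'

end MvPowerSeries

theorem Matrix.dvd_mul_mul_apply {l m n o α : Type*} [Fintype m] [Fintype n] [CommSemiring α]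
    {a : α} (A : Matrix l m α) (M : Matrix m n α) (B : Matrix n o α) (hM : ∀ i j, a ∣ M i j)
    (i : l) (j : o) : a ∣ (A * M * B) i j := by
  simp only [Matrix.mul_apply, Finset.sum_mul]
  exact Finset.dvd_sum fun k _ => Finset.dvd_sum fun k' _ =>
    ((hM k' k).mul_left _).mul_right _

theorem statement_5_general (p : ℕ) [Fact p.Prime]
    (U : W p)
    -- `Φ` is the ring endomorphism `φ` of `W[[X₁,X₂]]` (characterized by coefficients):
    (Φ : Mv p →+* Mv p)
    (hΦ₁ : ∀ (F : Mv p) (d : Fin 2 →₀ ℕ),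
      MvPowerSeries.coeff (p • d) (Φ F) = phiW p (MvPowerSeries.coeff d F))
    (hΦ₂ : ∀ (F : Mv p) (d : Fin 2 →₀ ℕ),
      (¬ ∃ e : Fin 2 →₀ ℕ, d = p • e) → MvPowerSeries.coeff d (Φ F) = 0)
    -- `fX1p = f(X₁^p)`:
    (fX1p : Mv p)
    -- the sequences `Y_ℓ`, `Z_ℓ`:
    (Yseq Zseq : ℕ → Matrix (Fin 2) (Fin 2) (Mv p))
    (hY1 : Yseq 1 = 0)
    (hZ1 : Zseq 1 =
      !![CMv p U * (MvPowerSeries.X 1 * fX1p),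
          CMv p U * (-((p : Mv p) * MvPowerSeries.X 1) - (MvPowerSeries.X 1) ^ 2 * fX1p);
          0, CMv p U * (-(MvPowerSeries.X 1 * fX1p))])
    (hrecY : ∀ l, 1 ≤ l → Yseq (l + 1) =
      !![(MvPowerSeries.X 0 : Mv p), ((p : Mv p)); 1, 0] * (Zseq l).map ⇑Φ *
        !![0, ((p : Mv p)); 1, -(MvPowerSeries.X 0 : Mv p)])
    (hrecZ : ∀ l, 1 ≤ l → Zseq (l + 1) =
      !![(MvPowerSeries.X 1 : Mv p), ((p : Mv p)); 1, 0] * (Yseq l).map ⇑Φ *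
        !![0, ((p : Mv p)); 1, -(MvPowerSeries.X 1 : Mv p)]) :
    ∀ l, 1 ≤ l →
      (Odd l → Yseq l = 0 ∧
        ∀ i j, (MvPowerSeries.X 1 : Mv p) ^ (p ^ (l - 1)) ∣ Zseq l i j) ∧
      (Even l → Zseq l = 0 ∧
        ∀ i j, (MvPowerSeries.X 1 : Mv p) ^ (p ^ (l - 1)) ∣ Yseq l i j) := by
  have step : ∀ {l : ℕ} (A M B : Matrix (Fin 2) (Fin 2) (Mv p)),
      (∀ i j, (MvPowerSeries.X 1 : Mv p) ^ p ^ (l - 1) ∣ M i j) → 1 ≤ l →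
      ∀ i j, (MvPowerSeries.X 1 : Mv p) ^ p ^ (l + 1 - 1) ∣ (A * M.map Φ * B) i j := by
    intro l A M B hM hl
    obtain ⟨k, rfl⟩ := Nat.exists_eq_add_of_le' hl
    refine Matrix.dvd_mul_mul_apply _ _ _ fun i j => ?_
    simpa [pow_succ', ← mul_comm p] using
      MvPowerSeries.X_pow_mul_dvd_of_coeff_nsmul (map_zero (phiW p)) hΦ₁ hΦ₂ (hM i j)
  have hZ1_dvd : ∀ i j, (MvPowerSeries.X 1 : Mv p) ∣ Zseq 1 i j := by
    have hZ1_eq : Zseq 1 = (MvPowerSeries.X 1 : Mv p) •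
        !![CMv p U * fX1p, CMv p U * (-(p : Mv p) - MvPowerSeries.X 1 * fX1p);
          0, -(CMv p U * fX1p)] := by
      rw [hZ1]
      ext i j : 1
      fin_cases i <;> fin_cases j <;>
        simp only [Matrix.smul_apply, smul_eq_mul, Matrix.of_apply, Matrix.cons_val',
          Matrix.cons_val_zero, Matrix.cons_val_one, Matrix.cons_val_fin_one, Fin.zero_eta,
          Fin.mk_one] <;> ring
    exact fun i j => hZ1_eq ▸ dvd_mul_right _ _
  intro l hl
  induction l, hl using Nat.le_induction with
  | base => exact ⟨fun _ => ⟨hY1, by simpa using hZ1_dvd⟩, fun h => absurd h Nat.not_even_one⟩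
  | succ l hl ih =>
    constructor
    · intro hodd
      obtain ⟨hZ0, hYdvd⟩ := ih.2 (Nat.not_odd_iff_even.mp (Nat.odd_add_one.mp hodd))
      exact ⟨by simp [hrecY l hl, hZ0], by rw [hrecZ l hl]; exact step _ _ _ hYdvd hl⟩
    · intro heven
      obtain ⟨hY0, hZdvd⟩ := ih.1 (Nat.not_even_iff_odd.mp (Nat.even_add_one.mp heven))
      exact ⟨by simp [hrecZ l hl, hY0], by rw [hrecY l hl]; exact step _ _ _ hZdvd hl⟩

/-- Let `U ∈ W` and let `Y_ℓ`, `Z_ℓ` (`ℓ ≥ 1`) be the 2×2 matrices over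
`W[[X₁,X₂]]` defined by `Y₁ = 0`,
`Z₁ = U·[[X₂·f(X₁^p), −p·X₂ − X₂²·f(X₁^p)], [0, −X₂·f(X₁^p)]]` and the recursions
`Y_{ℓ+1} = [[X₁, p], [1, 0]]·φ(Z_ℓ)·[[0, p], [1, −X₁]]`,
`Z_{ℓ+1} = [[X₂, p], [1, 0]]·φ(Y_ℓ)·[[0, p], [1, −X₂]]`, where `φ` is the ring endomorphism
of `W[[X₁,X₂]]` acting as `φ_W` on coefficients and sending `Xᵢ` to `Xᵢ^p`, applied
entrywise.  Then for every `ℓ ≥ 1`: if `ℓ` is odd then `Y_ℓ = 0` and every entry of `Z_ℓ` is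
divisible by `X₂^{p^{ℓ−1}}`; if `ℓ` is even then `Z_ℓ = 0` and every entry of `Y_ℓ` is
divisible by `X₂^{p^{ℓ−1}}`. -/
theorem statement_5 (p : ℕ) [Fact p.Prime]
    (U : W p)
    -- `Φ` is the ring endomorphism `φ` of `W[[X₁,X₂]]` (characterized by coefficients):
    (Φ : Mv p →+* Mv p)
    (hΦ₁ : ∀ (F : Mv p) (d : Fin 2 →₀ ℕ),
      MvPowerSeries.coeff (p • d) (Φ F) = phiW p (MvPowerSeries.coeff d F))
    (hΦ₂ : ∀ (F : Mv p) (d : Fin 2 →₀ ℕ),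
      (¬ ∃ e : Fin 2 →₀ ℕ, d = p • e) → MvPowerSeries.coeff d (Φ F) = 0)
    -- `fX1p = f(X₁^p)`:
    (fX1p : Mv p) (hfX1p : IsEvalAtX1Pow p p (fSeries p) fX1p)
    -- the sequences `Y_ℓ`, `Z_ℓ`:
    (Yseq Zseq : ℕ → Matrix (Fin 2) (Fin 2) (Mv p))
    (hY1 : Yseq 1 = 0)
    (hZ1 : Zseq 1 =
      !![CMv p U * (MvPowerSeries.X 1 * fX1p),
          CMv p U * (-((p : Mv p) * MvPowerSeries.X 1) - (MvPowerSeries.X 1) ^ 2 * fX1p);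
          0, CMv p U * (-(MvPowerSeries.X 1 * fX1p))])
    (hrecY : ∀ l, 1 ≤ l → Yseq (l + 1) =
      !![(MvPowerSeries.X 0 : Mv p), ((p : Mv p)); 1, 0] * (Zseq l).map ⇑Φ *
        !![0, ((p : Mv p)); 1, -(MvPowerSeries.X 0 : Mv p)])
    (hrecZ : ∀ l, 1 ≤ l → Zseq (l + 1) =
      !![(MvPowerSeries.X 1 : Mv p), ((p : Mv p)); 1, 0] * (Yseq l).map ⇑Φ *
        !![0, ((p : Mv p)); 1, -(MvPowerSeries.X 1 : Mv p)]) :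
    ∀ l, 1 ≤ l →
      (Odd l → Yseq l = 0 ∧
        ∀ i j, (MvPowerSeries.X 1 : Mv p) ^ (p ^ (l - 1)) ∣ Zseq l i j) ∧
      (Even l → Zseq l = 0 ∧
        ∀ i j, (MvPowerSeries.X 1 : Mv p) ^ (p ^ (l - 1)) ∣ Yseq l i j) :=
  statement_5_general p U Φ hΦ₁ hΦ₂ fX1p Yseq Zseq hY1 hZ1 hrecY hrecZ

end
end

section
/- Assume U is a unit of W. For every integer ℓ ≥ 1 there exist a power series u_ℓ ∈ W[[X₁]] whose image in 𝔽[[X₁]] (reduction modulo p) is nonzero and a power series g_ℓ ∈ W[[X₁,X₂]] such that: if ℓ is odd, the upper-right entry of Z_ℓ equals u_ℓ·ε₊(ℓ) + p·X₂^{p^{ℓ−1}}·g_ℓ; and if ℓ is even, the upper-right entry of Y_ℓ equals u_ℓ·ε₋(ℓ) + p·X₂^{p^{ℓ−1}}·g_ℓ. (This is the structure result for the entries α_k, β_k driving the computation of the multiplicities of the vertical components.) -/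
noncomputable section

/-!
Write `Z_ℓ` (`ℓ` odd), resp. `Y_ℓ` (`ℓ` even), as `X₂^N • B` with `N = p^(ℓ-1)` and upper-right
entry `u X₂^e + p X₂^N g`. Since `φ X₂ = X₂^p`, applying `φ` multiplies `N` and `e` by `p`.
Conjugating by `[[x, p], [1, 0]]` and `[[0, p], [1, -x]]` gives the upper-right entry
`p x A₀₀ - x² A₀₁ + p² A₁₀ - p x A₁₁`, in which every term but `-x² A₀₁` lies in `p X₂^N`;
so the new leading term is `-x² u X₂^e`. For `x = X₁` the factor `-X₁²` is absorbed into `u`,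
for `x = X₂` it adds `2` to `e`: this produces the exponents `ε₊(ℓ)` and `ε₋(ℓ)`.
The condition `p ∤ u` is carried as "some coefficient of `u` is a unit of `W`", which survives
`φ`, negation and multiplication by `X₁²`. Here `X₁ = X 0` and `X₂ = X 1`.
-/

namespace MvPowerSeries

variable {σ R : Type*}

section Avoiding

variable [Ring R]

def subringAvoiding (s : σ) : Subring (MvPowerSeries σ R) where
  carrier := {F | ∀ d : σ →₀ ℕ, d s ≠ 0 → coeff d F = 0}
  mul_mem' {F G} hF hG d hd := by
    classical
    rw [coeff_mul]
    refine Finset.sum_eq_zero fun x hx => ?_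
    rw [Finset.HasAntidiagonal.mem_antidiagonal] at hx
    by_cases h : x.1 s = 0
    · rw [hG x.2 (by simpa [← hx, h] using hd), mul_zero]
    · rw [hF x.1 h, zero_mul]
  one_mem' d hd := by
    classical
    rw [coeff_one, if_neg]
    rintro rfl
    exact hd rfl
  add_mem' hF hG d hd := by rw [map_add, hF d hd, hG d hd, add_zero]
  zero_mem' d _ := map_zero _
  neg_mem' hF d hd := by rw [map_neg, hF d hd, neg_zero]

theorem C_mem_subringAvoiding (s : σ) (a : R) : C a ∈ subringAvoiding s := by
  classical
  intro d hd
  rw [coeff_C, if_neg]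
  rintro rfl
  exact hd rfl

theorem X_mem_subringAvoiding {s t : σ} (h : t ≠ s) : X t ∈ subringAvoiding (R := R) s := by
  classical
  intro d hd
  rw [coeff_X, if_neg]
  rintro rfl
  exact hd (Finsupp.single_eq_of_ne h.symm)

end Avoiding

structure IsFrobeniusLift_s6 [Semiring R] (q : ℕ) (τ : R →+* R)
    (Φ : MvPowerSeries σ R →+* MvPowerSeries σ R) : Prop where
  coeff_nsmul : ∀ F d, coeff (q • d) (Φ F) = τ (coeff d F)
  coeff_eq_zero : ∀ F d, (¬ ∃ e, d = q • e) → coeff d (Φ F) = 0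

namespace IsFrobeniusLift_s6

variable {q : ℕ}

section Semiring

variable [Semiring R] {τ : R →+* R} {Φ : MvPowerSeries σ R →+* MvPowerSeries σ R}

theorem map_X (hΦ : IsFrobeniusLift_s6 q τ Φ) (hq : q ≠ 0) (s : σ) : Φ (X s) = X s ^ q := by
  classical
  ext d
  rw [coeff_X_pow]
  by_cases h : ∃ e, d = q • e
  · obtain ⟨e, rfl⟩ := h
    have hsingle : Finsupp.single s q = q • Finsupp.single s 1 := by simp
    rw [hΦ.coeff_nsmul, coeff_X]
    simp only [hsingle, (smul_right_injective _ hq).eq_iff]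
    split_ifs <;> simp
  · rw [hΦ.coeff_eq_zero _ _ h, if_neg]
    rintro rfl
    exact h ⟨Finsupp.single s 1, by simp⟩

theorem isUnit_coeff_nsmul (hΦ : IsFrobeniusLift_s6 q τ Φ) {F : MvPowerSeries σ R} {d : σ →₀ ℕ}
    (hF : IsUnit (coeff d F)) : IsUnit (coeff (q • d) (Φ F)) :=
  hΦ.coeff_nsmul F d ▸ hF.map τ

end Semiring

variable [Ring R] {τ : R →+* R} {Φ : MvPowerSeries σ R →+* MvPowerSeries σ R}

theorem map_mem_subringAvoiding (hΦ : IsFrobeniusLift_s6 q τ Φ) {s : σ}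
    {F : MvPowerSeries σ R} (hF : F ∈ subringAvoiding s) : Φ F ∈ subringAvoiding s := by
  intro d hd
  by_cases h : ∃ e, d = q • e
  · obtain ⟨e, rfl⟩ := h
    rw [hΦ.coeff_nsmul, hF e fun he => hd (by simp [he]), map_zero]
  · exact hΦ.coeff_eq_zero F d h

end IsFrobeniusLift_s6

theorem not_C_dvd_of_isUnit_coeff [CommSemiring R] {a : R} (ha : ¬ IsUnit a)
    {F : MvPowerSeries σ R} {d : σ →₀ ℕ} (hF : IsUnit (coeff d F)) : ¬ C a ∣ F := by
  rintro ⟨G, rfl⟩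
  rw [coeff_C_mul] at hF
  exact ha (isUnit_of_mul_isUnit_left hF)

end MvPowerSeries

namespace Matrix

variable {R : Type*} [CommRing R]

theorem conj_apply_zero_one (x c : R) (A : Matrix (Fin 2) (Fin 2) R) :
    (!![x, c; 1, 0] * A * !![0, c; 1, -x]) 0 1 =
      c * x * A 0 0 - x ^ 2 * A 0 1 + c ^ 2 * A 1 0 - c * x * A 1 1 := by
  simp only [mul_apply, Fin.sum_univ_two, of_apply, cons_val', cons_val_zero, cons_val_one,
    cons_val_fin_one]
  ring

theorem exists_conj_smul_zero_one (x c y u g : R) (N e : ℕ) (B : Matrix (Fin 2) (Fin 2) R)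
    (h : y ^ N * B 0 1 = u * y ^ e + c * y ^ N * g) :
    ∃ B' g', !![x, c; 1, 0] * (y ^ N • B) * !![0, c; 1, -x] = y ^ N • B' ∧
      y ^ N * B' 0 1 = -(x ^ 2 * u) * y ^ e + c * y ^ N * g' := by
  refine ⟨!![x, c; 1, 0] * B * !![0, c; 1, -x],
    x * B 0 0 + c * B 1 0 - x * B 1 1 - x ^ 2 * g, by rw [Matrix.mul_smul, Matrix.smul_mul], ?_⟩
  rw [conj_apply_zero_one]
  linear_combination (-x ^ 2) * h

end Matrix

theorem Finset.sum_filter_odd_range_succ_pow (p n : ℕ) :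
    ∑ i ∈ (Finset.range (n + 1)).filter Odd, p ^ i =
      p * ∑ i ∈ (Finset.range n).filter Even, p ^ i := by
  simp only [Finset.sum_filter, Finset.sum_range_succ', Nat.odd_add_one, Nat.not_odd_iff_even,
    Finset.mul_sum, pow_succ', mul_ite, mul_zero]
  simp

theorem Finset.sum_filter_even_range_succ_pow (p n : ℕ) :
    ∑ i ∈ (Finset.range (n + 1)).filter Even, p ^ i =
      p * ∑ i ∈ (Finset.range n).filter Odd, p ^ i + 1 := by
  simp only [Finset.sum_filter, Finset.sum_range_succ', Nat.even_add_one, Nat.not_even_iff_odd,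
    Finset.mul_sum, pow_succ', mul_ite, mul_zero]
  simp

section LeadingTerm

open MvPowerSeries

theorem coeff_one_fSeries (p : ℕ) : PowerSeries.coeff 1 (fSeries p) = 1 := by
  rw [fSeries, PowerSeries.coeff_mk, if_pos ⟨0, by simp⟩]

variable {p : ℕ} [Fact p.Prime]

def HasLeadingTerm (N e : ℕ) (M : Matrix (Fin 2) (Fin 2) (Mv p)) : Prop :=
  ∃ u ∈ subringAvoiding 1, (∃ d, IsUnit (coeff d u)) ∧
    ∃ (g : Mv p) (B : Matrix (Fin 2) (Fin 2) (Mv p)),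
      M = (X 1 : Mv p) ^ N • B ∧ X 1 ^ N * B 0 1 = u * X 1 ^ e + (p : Mv p) * X 1 ^ N * g

theorem hasLeadingTerm_one {U : W p} (hU : IsUnit U) {f : Mv p}
    (hf : IsEvalAtX1Pow p p (fSeries p) f) :
    HasLeadingTerm 1 2 !![CMv p U * (X 1 * f), CMv p U * (-((p : Mv p) * X 1) - X 1 ^ 2 * f);
      0, CMv p U * (-(X 1 * f))] := by
  refine ⟨-(CMv p U * f), neg_mem (mul_mem (C_mem_subringAvoiding 1 U) hf.2.1),
    ⟨Finsupp.single 0 (p * 1), ?_⟩, -CMv p U,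
    !![CMv p U * f, CMv p U * (-(p : Mv p) - X 1 * f); 0, -(CMv p U * f)], ?_, ?_⟩
  · rw [map_neg, coeff_C_mul, hf.1 1, coeff_one_fSeries]
    simpa using hU
  · simp only [pow_one, Matrix.smul_of, Matrix.smul_cons, Matrix.smul_empty, smul_eq_mul]
    ring_nf
  · show X 1 ^ 1 * (CMv p U * (-(p : Mv p) - X 1 * f)) = _
    ring

variable {Φ : Mv p →+* Mv p}

theorem HasLeadingTerm.map (hΦ : IsFrobeniusLift_s6 p (phiW p) Φ) {N e : ℕ}
    {M : Matrix (Fin 2) (Fin 2) (Mv p)} (hM : HasLeadingTerm N e M) :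
    HasLeadingTerm (p * N) (p * e) (M.map Φ) := by
  obtain ⟨u, hu, ⟨d, hd⟩, g, B, rfl, h⟩ := hM
  have hX := hΦ.map_X (Fact.out : p.Prime).ne_zero 1
  refine ⟨Φ u, hΦ.map_mem_subringAvoiding hu, ⟨p • d, hΦ.isUnit_coeff_nsmul hd⟩, Φ g,
    B.map Φ, ?_, ?_⟩
  · ext i j : 2
    simp [hX, pow_mul]
  · simpa [hX, pow_mul] using congrArg Φ h

theorem HasLeadingTerm.conj_X0 {N e : ℕ} {M : Matrix (Fin 2) (Fin 2) (Mv p)}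
    (hM : HasLeadingTerm N e M) :
    HasLeadingTerm N e (!![X 0, (p : Mv p); 1, 0] * M * !![0, (p : Mv p); 1, -X 0]) := by
  obtain ⟨u, hu, ⟨d, hd⟩, g, B, rfl, h⟩ := hM
  obtain ⟨B', g', hB', h'⟩ := Matrix.exists_conj_smul_zero_one (X 0) _ _ _ _ _ _ B h
  refine ⟨-(X 0 ^ 2 * u), neg_mem (mul_mem (pow_mem (X_mem_subringAvoiding zero_ne_one) 2) hu),
    ⟨Finsupp.single 0 2 + d, ?_⟩, g', B', hB', h'⟩
  rw [map_neg, X_pow_eq, coeff_add_monomial_mul, one_mul]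
  exact hd.neg

theorem HasLeadingTerm.conj_X1 {N e : ℕ} {M : Matrix (Fin 2) (Fin 2) (Mv p)}
    (hM : HasLeadingTerm N e M) :
    HasLeadingTerm N (e + 2) (!![X 1, (p : Mv p); 1, 0] * M * !![0, (p : Mv p); 1, -X 1]) := by
  obtain ⟨u, hu, ⟨d, hd⟩, g, B, rfl, h⟩ := hM
  obtain ⟨B', g', hB', h'⟩ := Matrix.exists_conj_smul_zero_one (X 1) _ _ _ _ _ _ B h
  exact ⟨-u, neg_mem hu, ⟨d, by simpa using hd⟩, g', B', hB', by rw [h']; ring⟩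

theorem HasLeadingTerm.exists_eq {N e : ℕ} {M : Matrix (Fin 2) (Fin 2) (Mv p)}
    (hM : HasLeadingTerm N e M) : ∃ u g : Mv p, (∀ d : Fin 2 →₀ ℕ, d 1 ≠ 0 → coeff d u = 0) ∧
      ¬ (p : Mv p) ∣ u ∧ M 0 1 = u * X 1 ^ e + (p : Mv p) * X 1 ^ N * g := by
  obtain ⟨u, hu, ⟨d, hd⟩, g, B, rfl, h⟩ := hM
  refine ⟨u, g, hu, ?_, by simpa using h⟩
  rw [← map_natCast (C : W p →+* Mv p)]
  exact not_C_dvd_of_isUnit_coeff (WittVector.irreducible p).not_isUnit hd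

theorem hasLeadingTerm_of_recursion (hΦ : IsFrobeniusLift_s6 p (phiW p) Φ)
    {Y Z : ℕ → Matrix (Fin 2) (Fin 2) (Mv p)} (hZ : HasLeadingTerm 1 2 (Z 1))
    (hY : ∀ n, Y (n + 2) =
      !![X 0, (p : Mv p); 1, 0] * (Z (n + 1)).map Φ * !![0, (p : Mv p); 1, -X 0])
    (hZ' : ∀ n, Z (n + 2) =
      !![X 1, (p : Mv p); 1, 0] * (Y (n + 1)).map Φ * !![0, (p : Mv p); 1, -X 1]) (n : ℕ) :
    (Odd (n + 1) → HasLeadingTerm (p ^ n)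
        (2 * ∑ i ∈ (Finset.range (n + 1)).filter Even, p ^ i) (Z (n + 1))) ∧
      (Even (n + 1) → HasLeadingTerm (p ^ n)
        (2 * ∑ i ∈ (Finset.range (n + 1)).filter Odd, p ^ i) (Y (n + 1))) := by
  induction n with
  | zero =>
    refine ⟨fun _ => ?_, by simp⟩
    rwa [pow_zero, Finset.sum_filter, Finset.sum_range_one, if_pos Even.zero, pow_zero]
  | succ n ih =>
    rw [hY, hZ', pow_succ' p n]
    rcases Nat.even_or_odd (n + 1) with h | h
    · refine ⟨fun _ => ?_, fun h' => absurd h' (Nat.not_even_iff_odd.2 h.add_one)⟩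
      rw [Finset.sum_filter_even_range_succ_pow p (n + 1), mul_add, mul_left_comm, mul_one]
      exact ((ih.2 h).map hΦ).conj_X1
    · refine ⟨fun h' => absurd h' (Nat.not_odd_iff_even.2 h.add_one), fun _ => ?_⟩
      rw [Finset.sum_filter_odd_range_succ_pow p (n + 1), mul_left_comm]
      exact ((ih.1 h).map hΦ).conj_X0

end LeadingTerm

theorem statement_6_general (p : ℕ) [Fact p.Prime]
    (U : W p) (hU : IsUnit U)
    -- `Φ` is the ring endomorphism `φ` of `W[[X₁,X₂]]` (characterized by coefficients):
    (Φ : Mv p →+* Mv p)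
    (hΦ₁ : ∀ (F : Mv p) (d : Fin 2 →₀ ℕ),
      MvPowerSeries.coeff (p • d) (Φ F) = phiW p (MvPowerSeries.coeff d F))
    (hΦ₂ : ∀ (F : Mv p) (d : Fin 2 →₀ ℕ),
      (¬ ∃ e : Fin 2 →₀ ℕ, d = p • e) → MvPowerSeries.coeff d (Φ F) = 0)
    -- `fX1p = f(X₁^p)`:
    (fX1p : Mv p) (hfX1p : IsEvalAtX1Pow p p (fSeries p) fX1p)
    -- the sequences `Y_ℓ`, `Z_ℓ`:
    (Yseq Zseq : ℕ → Matrix (Fin 2) (Fin 2) (Mv p))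
    (hZ1 : Zseq 1 =
      !![CMv p U * (MvPowerSeries.X 1 * fX1p),
          CMv p U * (-((p : Mv p) * MvPowerSeries.X 1) - (MvPowerSeries.X 1) ^ 2 * fX1p);
          0, CMv p U * (-(MvPowerSeries.X 1 * fX1p))])
    (hrecY : ∀ l, 1 ≤ l → Yseq (l + 1) =
      !![(MvPowerSeries.X 0 : Mv p), ((p : Mv p)); 1, 0] * (Zseq l).map ⇑Φ *
        !![0, ((p : Mv p)); 1, -(MvPowerSeries.X 0 : Mv p)])
    (hrecZ : ∀ l, 1 ≤ l → Zseq (l + 1) =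
      !![(MvPowerSeries.X 1 : Mv p), ((p : Mv p)); 1, 0] * (Yseq l).map ⇑Φ *
        !![0, ((p : Mv p)); 1, -(MvPowerSeries.X 1 : Mv p)]) :
    ∀ l, 1 ≤ l → ∃ uu gg : Mv p,
      (∀ d : Fin 2 →₀ ℕ, d 1 ≠ 0 → MvPowerSeries.coeff d uu = 0) ∧
      ¬ ((p : Mv p) ∣ uu) ∧
      (Odd l → Zseq l 0 1 =
        uu * (MvPowerSeries.X 1 : Mv p) ^
            (2 * ∑ i ∈ (Finset.range l).filter (fun i => Even i), p ^ i) +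
          (p : Mv p) * (MvPowerSeries.X 1 : Mv p) ^ (p ^ (l - 1)) * gg) ∧
      (Even l → Yseq l 0 1 =
        uu * (MvPowerSeries.X 1 : Mv p) ^
            (2 * ∑ i ∈ (Finset.range l).filter (fun i => Odd i), p ^ i) +
          (p : Mv p) * (MvPowerSeries.X 1 : Mv p) ^ (p ^ (l - 1)) * gg) := by
  have key := hasLeadingTerm_of_recursion (Φ := Φ) ⟨hΦ₁, hΦ₂⟩
    (hZ1 ▸ hasLeadingTerm_one hU hfX1p)
    (fun n => hrecY (n + 1) (Nat.le_add_left 1 n)) (fun n => hrecZ (n + 1) (Nat.le_add_left 1 n))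
  intro l hl
  obtain ⟨n, rfl⟩ := Nat.exists_eq_add_of_le' hl
  rcases Nat.even_or_odd (n + 1) with h | h
  · obtain ⟨u, g, hu, hpu, hY⟩ := ((key n).2 h).exists_eq
    exact ⟨u, g, hu, hpu, fun h' => absurd h' (Nat.not_odd_iff_even.2 h), fun _ => by simpa using hY⟩
  · obtain ⟨u, g, hu, hpu, hZ⟩ := ((key n).1 h).exists_eq
    exact ⟨u, g, hu, hpu, fun _ => by simpa using hZ, fun h' => absurd h' (Nat.not_even_iff_odd.2 h)⟩

/-- Assume `U` is a unit of `W`, and let `Y_ℓ`, `Z_ℓ` (`ℓ ≥ 1`) be the 2×2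
matrices over `W[[X₁,X₂]]` defined by `Y₁ = 0`,
`Z₁ = U·[[X₂·f(X₁^p), −p·X₂ − X₂²·f(X₁^p)], [0, −X₂·f(X₁^p)]]` and the recursions
`Y_{ℓ+1} = [[X₁, p], [1, 0]]·φ(Z_ℓ)·[[0, p], [1, −X₁]]`,
`Z_{ℓ+1} = [[X₂, p], [1, 0]]·φ(Y_ℓ)·[[0, p], [1, −X₂]]`.  Then for every `ℓ ≥ 1` there are a
power series `u_ℓ ∈ W[[X₁]]` whose reduction modulo `p` (its image in `𝔽[[X₁]]`) is nonzero
and a power series `g_ℓ ∈ W[[X₁,X₂]]` such that: if `ℓ` is odd the upper-right entry of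
`Z_ℓ` equals `u_ℓ·ε₊(ℓ) + p·X₂^{p^{ℓ−1}}·g_ℓ`, and if `ℓ` is even the upper-right entry of
`Y_ℓ` equals `u_ℓ·ε₋(ℓ) + p·X₂^{p^{ℓ−1}}·g_ℓ`, where
`ε₊(ℓ) = X₂^{2·∑_{0≤i<ℓ, i even} p^i}` and `ε₋(ℓ) = X₂^{2·∑_{0≤i<ℓ, i odd} p^i}`.
(Here `u_ℓ ∈ W[[X₁]]` means that all coefficients of `u_ℓ` at monomials involving `X₂`
vanish, and nonvanishing of the reduction modulo `p` means `p ∤ u_ℓ` in `W[[X₁,X₂]]`.) -/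
theorem statement_6 (p : ℕ) [Fact p.Prime]
    (U : W p) (hU : IsUnit U)
    -- `Φ` is the ring endomorphism `φ` of `W[[X₁,X₂]]` (characterized by coefficients):
    (Φ : Mv p →+* Mv p)
    (hΦ₁ : ∀ (F : Mv p) (d : Fin 2 →₀ ℕ),
      MvPowerSeries.coeff (p • d) (Φ F) = phiW p (MvPowerSeries.coeff d F))
    (hΦ₂ : ∀ (F : Mv p) (d : Fin 2 →₀ ℕ),
      (¬ ∃ e : Fin 2 →₀ ℕ, d = p • e) → MvPowerSeries.coeff d (Φ F) = 0)
    -- `fX1p = f(X₁^p)`: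
    (fX1p : Mv p) (hfX1p : IsEvalAtX1Pow p p (fSeries p) fX1p)
    -- the sequences `Y_ℓ`, `Z_ℓ`:
    (Yseq Zseq : ℕ → Matrix (Fin 2) (Fin 2) (Mv p))
    (hY1 : Yseq 1 = 0)
    (hZ1 : Zseq 1 =
      !![CMv p U * (MvPowerSeries.X 1 * fX1p),
          CMv p U * (-((p : Mv p) * MvPowerSeries.X 1) - (MvPowerSeries.X 1) ^ 2 * fX1p);
          0, CMv p U * (-(MvPowerSeries.X 1 * fX1p))])
    (hrecY : ∀ l, 1 ≤ l → Yseq (l + 1) =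
      !![(MvPowerSeries.X 0 : Mv p), ((p : Mv p)); 1, 0] * (Zseq l).map ⇑Φ *
        !![0, ((p : Mv p)); 1, -(MvPowerSeries.X 0 : Mv p)])
    (hrecZ : ∀ l, 1 ≤ l → Zseq (l + 1) =
      !![(MvPowerSeries.X 1 : Mv p), ((p : Mv p)); 1, 0] * (Yseq l).map ⇑Φ *
        !![0, ((p : Mv p)); 1, -(MvPowerSeries.X 1 : Mv p)]) :
    ∀ l, 1 ≤ l → ∃ uu gg : Mv p,
      (∀ d : Fin 2 →₀ ℕ, d 1 ≠ 0 → MvPowerSeries.coeff d uu = 0) ∧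
      ¬ ((p : Mv p) ∣ uu) ∧
      (Odd l → Zseq l 0 1 =
        uu * (MvPowerSeries.X 1 : Mv p) ^
            (2 * ∑ i ∈ (Finset.range l).filter (fun i => Even i), p ^ i) +
          (p : Mv p) * (MvPowerSeries.X 1 : Mv p) ^ (p ^ (l - 1)) * gg) ∧
      (Even l → Yseq l 0 1 =
        uu * (MvPowerSeries.X 1 : Mv p) ^
            (2 * ∑ i ∈ (Finset.range l).filter (fun i => Odd i), p ^ i) +
          (p : Mv p) * (MvPowerSeries.X 1 : Mv p) ^ (p ^ (l - 1)) * gg) :=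
  statement_6_general p U hU Φ hΦ₁ hΦ₂ fX1p hfX1p Yseq Zseq hZ1 hrecY hrecZ

end
end

section
/- There is an inclusion of ideals (p^{2k+1}, x^{p^k}) ⊆ m·(α, β) in A. (Abstract form of Lemma 3.3.3 of the paper; in particular p^{2k+1} and x^{p^k} both lie in m·(α, β).) -/
/-!
Write `E = slotExp p`, so that `ε₋(ℓ)` (ℓ even) and `ε₊(ℓ)` (ℓ odd) are `x ^ E ℓ`, and
`M(j, l) = p ^ (2k-1-j-l) * x ^ (E j + E l)`. Multiplying `α` (resp. `β`) by
`p ^ (k-1-j) * x ^ E j` gives a relation among the `M(j, l)`, `l ≤ k`, whose coefficients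
are units for `l` even (resp. odd) and lie in `m` otherwise. Since `p ≥ 3`, the exponent `E`
is strictly convex, so `M(j, l)` is `x ^ s` times the middle monomial
`M(⌊(j+l)/2⌋, ⌈(j+l)/2⌉)`, with `s > 0` unless `|j - l| ≤ 1`. Hence the relations show that
the ideal `N` generated by the `M(i, i)` and `M(i, i+1)`, `i < k`, satisfies
`N ≤ (α, β) + m N`, and Nakayama gives `N ≤ (α, β)`. Finally `p ^ (2k+1) = p² M(0, 0)` and
`x ^ p^k = x ^ s M(k-1, k)` with `s = p^k - 2(1 + p + ⋯ + p^(k-1)) > 0`.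
-/

noncomputable section

/-- `ε₊(ℓ) = x ^ (2·∑_{0 ≤ i < ℓ, i even} p^i)`. -/
def epsPlus {A : Type*} [CommRing A] (p : ℕ) (x : A) (l : ℕ) : A :=
  x ^ (2 * ∑ i ∈ (Finset.range l).filter (fun i => Even i), p ^ i)

/-- `ε₋(ℓ) = x ^ (2·∑_{0 ≤ i < ℓ, i odd} p^i)`. -/
def epsMinus {A : Type*} [CommRing A] (p : ℕ) (x : A) (l : ℕ) : A :=
  x ^ (2 * ∑ i ∈ (Finset.range l).filter (fun i => Odd i), p ^ i)

/-- `α = ∑_{0≤ℓ≤k, ℓ even} u_ℓ·p^{k−ℓ}·ε₋(ℓ) + ∑_{0≤ℓ<k, ℓ odd} C_ℓ·p^{k−ℓ}·ε₊(ℓ)`. -/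
def alphaEl {A : Type*} [CommRing A] (p : ℕ) (x : A) (k : ℕ) (u C : ℕ → A) : A :=
  ∑ l ∈ (Finset.range (k + 1)).filter (fun l => Even l),
      u l * (p : A) ^ (k - l) * epsMinus p x l +
    ∑ l ∈ (Finset.range k).filter (fun l => Odd l), C l * (p : A) ^ (k - l) * epsPlus p x l

/-- `β = ∑_{0≤ℓ≤k, ℓ odd} u_ℓ·p^{k−ℓ}·ε₊(ℓ) + ∑_{0≤ℓ<k, ℓ even} C_ℓ·p^{k−ℓ}·ε₋(ℓ)`. -/
def betaEl {A : Type*} [CommRing A] (p : ℕ) (x : A) (k : ℕ) (u C : ℕ → A) : A :=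
  ∑ l ∈ (Finset.range (k + 1)).filter (fun l => Odd l),
      u l * (p : A) ^ (k - l) * epsPlus p x l +
    ∑ l ∈ (Finset.range k).filter (fun l => Even l), C l * (p : A) ^ (k - l) * epsMinus p x l

open Finset

theorem add_inner_le_add_outer {f : ℕ → ℕ} (hf : ∀ n, 2 * f (n + 1) < f n + f (n + 2))
    {a b c d : ℕ} (hab : a ≤ b) (hbc : b ≤ c) (h : a + d = b + c) :
    f b + f c + (b - a) ≤ f a + f d := by
  have slope : ∀ m n, m ≤ n → f (m + 1) + f n + (n - m) ≤ f m + f (n + 1) := by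
    intro m n hmn
    induction n, hmn using Nat.le_induction with
    | base => omega
    | succ n hmn ih =>
      have := hf n
      rw [show n + 2 = n + 1 + 1 from rfl] at this
      omega
  obtain ⟨t, rfl⟩ := Nat.exists_eq_add_of_le hab
  obtain rfl : d = c + t := by omega
  clear h hab
  induction t generalizing a with
  | zero => simp
  | succ t ih =>
    have h1 := ih (a := a + 1) (by omega)
    have h2 := slope a (c + t) (by omega)
    rw [show a + (t + 1) = a + 1 + t by omega, show c + (t + 1) = c + t + 1 by omega]
    omega

def slotExp (p : ℕ) : ℕ → ℕ
  | 0 => 0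
  | 1 => 2
  | n + 2 => slotExp p n + 2 * p ^ (n + 1)

theorem slotExp_add_slotExp_succ (p n : ℕ) :
    slotExp p n + slotExp p (n + 1) = 2 * ∑ i ∈ range (n + 1), p ^ i := by
  induction n with
  | zero => simp [slotExp]
  | succ n ih => rw [sum_range_succ, slotExp]; omega

theorem two_mul_geom_sum_lt {p : ℕ} (hp : 3 ≤ p) (n : ℕ) :
    2 * ∑ i ∈ range n, p ^ i < p ^ n := by
  have hgeom := geom_sum_mul_of_one_le (show 1 ≤ p by omega) n
  have : 2 * ∑ i ∈ range n, p ^ i ≤ (∑ i ∈ range n, p ^ i) * (p - 1) := by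
    rw [mul_comm]; exact Nat.mul_le_mul_left _ (by omega)
  have := Nat.one_le_pow n p (by omega)
  omega

theorem slotExp_add_slotExp_succ_lt {p : ℕ} (hp : 3 ≤ p) (n : ℕ) :
    slotExp p n + slotExp p (n + 1) < p ^ (n + 1) :=
  slotExp_add_slotExp_succ p n ▸ two_mul_geom_sum_lt hp (n + 1)

theorem slotExp_strictConvex {p : ℕ} (hp : 3 ≤ p) (n : ℕ) :
    2 * slotExp p (n + 1) < slotExp p n + slotExp p (n + 2) := by
  have := slotExp_add_slotExp_succ_lt hp n
  rw [slotExp]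
  omega

theorem epsMinus_of_even {A : Type*} [CommRing A] (p : ℕ) (x : A) {n : ℕ} (hn : Even n) :
    epsMinus p x n = x ^ slotExp p n := by
  rw [epsMinus]
  congr 1
  obtain ⟨m, rfl⟩ := hn
  induction m with
  | zero => simp [slotExp]
  | succ m ih =>
    rw [show m + 1 + (m + 1) = m + m + 2 by ring, slotExp, ← ih]
    simp [sum_filter, sum_range_succ, ← two_mul, Nat.odd_iff, Nat.add_mod]
    ring

theorem epsPlus_of_odd {A : Type*} [CommRing A] (p : ℕ) (x : A) {n : ℕ} (hn : Odd n) :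
    epsPlus p x n = x ^ slotExp p n := by
  rw [epsPlus]
  congr 1
  obtain ⟨m, rfl⟩ := hn
  induction m with
  | zero => simp [slotExp, sum_filter]
  | succ m ih =>
    rw [show 2 * (m + 1) + 1 = 2 * m + 1 + 2 by ring, slotExp, ← ih]
    simp [sum_filter, sum_range_succ, Nat.even_iff, Nat.add_mod]
    ring

section Expansion

variable {A : Type*} [CommRing A] (p : ℕ) (x : A) (k : ℕ) (u C : ℕ → A)

theorem alphaEl_eq_sum : alphaEl p x k u C = ∑ l ∈ range (k + 1),
    (if Even l then u l else if l < k then C l else 0) *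
      ((p : A) ^ (k - l) * x ^ slotExp p l) := by
  rw [alphaEl, sum_filter, sum_filter, sum_range_succ, sum_range_succ, add_right_comm,
    ← sum_add_distrib]
  congr 1
  · refine sum_congr rfl fun l hl => ?_
    have hlk : l < k := mem_range.1 hl
    by_cases hl : Even l
    · simp [hl, epsMinus_of_even p x hl, mul_assoc]
    · have hl' : Odd l := Nat.not_even_iff_odd.1 hl
      simp [hl, hl', hlk, epsPlus_of_odd p x hl', mul_assoc]
  · by_cases hk : Even k <;> simp [hk, epsMinus_of_even]

theorem betaEl_eq_sum : betaEl p x k u C = ∑ l ∈ range (k + 1),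
    (if Odd l then u l else if l < k then C l else 0) *
      ((p : A) ^ (k - l) * x ^ slotExp p l) := by
  rw [betaEl, sum_filter, sum_filter, sum_range_succ, sum_range_succ, add_right_comm,
    ← sum_add_distrib]
  congr 1
  · refine sum_congr rfl fun l hl => ?_
    have hlk : l < k := mem_range.1 hl
    by_cases hl : Odd l
    · simp [hl, epsPlus_of_odd p x hl, mul_assoc]
    · have hl' : Even l := Nat.not_odd_iff_even.1 hl
      simp [hl, hl', hlk, epsMinus_of_even p x hl', mul_assoc]
  · by_cases hk : Odd k <;> simp [hk, epsPlus_of_odd]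

end Expansion

section PairMonomial

variable {A : Type*} [CommRing A] (P X : A) (E : ℕ → ℕ) (k : ℕ) (I : Ideal A)

def pairMonomial (i j : ℕ) : A := P ^ (2 * k - 1 - (i + j)) * X ^ (E i + E j)

theorem pairMonomial_comm (i j : ℕ) : pairMonomial P X E k i j = pairMonomial P X E k j i := by
  simp only [pairMonomial, add_comm]

theorem exists_pairMonomial_eq_pow_mul_middle (hE : ∀ n, 2 * E (n + 1) < E n + E (n + 2))
    (j l : ℕ) : ∃ s, (j + l) / 2 - min j l ≤ s ∧
      pairMonomial P X E k j l =
        X ^ s * pairMonomial P X E k ((j + l) / 2) ((j + l + 1) / 2) := by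
  wlog hjl : j ≤ l generalizing j l
  · obtain ⟨s, hs, heq⟩ := this l j (by omega)
    exact ⟨s, by rwa [add_comm, min_comm], by rwa [pairMonomial_comm, add_comm j]⟩
  have hconv := add_inner_le_add_outer hE (a := j) (b := (j + l) / 2) (c := (j + l + 1) / 2)
    (d := l) (by omega) (by omega) (by omega)
  refine ⟨E j + E l - (E ((j + l) / 2) + E ((j + l + 1) / 2)), by omega, ?_⟩
  rw [pairMonomial, pairMonomial, mul_left_comm, ← pow_add,
    show (j + l) / 2 + (j + l + 1) / 2 = j + l by omega, Nat.sub_add_cancel (by omega)]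

def pairSpan : Ideal A :=
  Ideal.span
    ((fun q : ℕ × ℕ => pairMonomial P X E k q.1 (q.1 + q.2)) '' (Set.Iio k ×ˢ Set.Iio 2))

theorem pairMonomial_mem_pairSpan {i i' : ℕ} (hi : i < k) (hii' : i ≤ i') (hi' : i' ≤ i + 1) :
    pairMonomial P X E k i i' ∈ pairSpan P X E k := by
  refine Ideal.subset_span ⟨(i, i' - i), ⟨hi, show i' - i < 2 by omega⟩, ?_⟩
  simp only [Nat.add_sub_cancel' hii']

def IsPivotRow (j0 : ℕ) (γ : A) : Prop :=
  ∃ c : ℕ → A, IsUnit (c j0) ∧ (∀ l ≤ k, l % 2 ≠ j0 % 2 → c l ∈ I) ∧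
    γ = ∑ l ∈ range (k + 1), c l * (P ^ (k - l) * X ^ E l)

variable {P X E k}

theorem mul_pairMonomial_mem (hX : X ∈ I) (hE : ∀ n, 2 * E (n + 1) < E n + E (n + 2))
    {j l : ℕ} (hj : j < k) (hl : l ≤ k) {c : A} (h : c ∈ I ∨ min j l < (j + l) / 2) :
    c * pairMonomial P X E k j l ∈ I * pairSpan P X E k := by
  obtain ⟨s, hs, heq⟩ := exists_pairMonomial_eq_pow_mul_middle P X E k hE j l
  rw [heq, ← mul_assoc]
  refine Ideal.mul_mem_mul ?_ (pairMonomial_mem_pairSpan P X E k (by omega) (by omega) (by omega))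
  rcases h with hc | hjl
  · exact I.mul_mem_right _ hc
  · exact I.mul_mem_left _ (I.pow_mem_of_mem hX s (by omega))

theorem pairMonomial_mem_of_isPivotRow {K : Ideal A} {j j0 : ℕ} {γ : A} (hj : j < k)
    (hj0 : j0 ≤ k) (hγ : γ ∈ K) (hrow : IsPivotRow P X E k I j0 γ)
    (hterms : ∀ c : ℕ → A, ∀ l ≤ k, l ≠ j0 → (l % 2 ≠ j0 % 2 → c l ∈ I) →
      c l * pairMonomial P X E k j l ∈ K) :
    pairMonomial P X E k j j0 ∈ K := by
  obtain ⟨c, hunit, hcI, rfl⟩ := hrow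
  have hexpand :
      P ^ (k - 1 - j) * X ^ E j * ∑ l ∈ range (k + 1), c l * (P ^ (k - l) * X ^ E l) =
        ∑ l ∈ range (k + 1), c l * pairMonomial P X E k j l := by
    rw [mul_sum]
    refine sum_congr rfl fun l hl => ?_
    rw [pairMonomial, show 2 * k - 1 - (j + l) = k - 1 - j + (k - l) by
      have := mem_range.1 hl; omega]
    ring
  have hsum := hexpand ▸ K.mul_mem_left (P ^ (k - 1 - j) * X ^ E j) hγ
  rw [← add_sum_erase _ _ (mem_range.2 (by omega : j0 < k + 1))] at hsum
  have hrest : ∑ l ∈ (range (k + 1)).erase j0, c l * pairMonomial P X E k j l ∈ K :=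
    K.sum_mem fun l hl => hterms c l (by have := mem_range.1 (mem_of_mem_erase hl); omega)
      (ne_of_mem_erase hl) (hcI l (by have := mem_range.1 (mem_of_mem_erase hl); omega))
  exact (Ideal.unit_mul_mem_iff_mem K hunit).1 (by simpa using K.sub_mem hsum hrest)

theorem pairSpan_le (hI : I ≤ Ideal.jacobson ⊥) (hX : X ∈ I)
    (hE : ∀ n, 2 * E (n + 1) < E n + E (n + 2)) (J : Ideal A)
    (hrow : ∀ j0 ≤ k, ∃ γ ∈ J, IsPivotRow P X E k I j0 γ) : pairSpan P X E k ≤ J := by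
  refine Submodule.le_of_le_smul_of_le_jacobson_bot
    (Submodule.fg_span (((Set.finite_Iio k).prod (Set.finite_Iio 2)).image _)) hI ?_
  have hterm : ∀ {j l : ℕ} {c : A}, j < k → l ≤ k → (c ∈ I ∨ min j l < (j + l) / 2) →
      c * pairMonomial P X E k j l ∈ J ⊔ I • pairSpan P X E k :=
    fun hj hl h => Ideal.mem_sup_right (mul_pairMonomial_mem I hX hE hj hl h)
  have hdiag : ∀ j < k, pairMonomial P X E k j j ∈ J ⊔ I • pairSpan P X E k := by
    intro j hj
    obtain ⟨γ, hγJ, hγ⟩ := hrow j hj.le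
    refine pairMonomial_mem_of_isPivotRow I hj hj.le (Ideal.mem_sup_left hγJ) hγ
      fun c l hl hne hc => hterm hj hl ?_
    by_cases hpar : l % 2 = j % 2
    · exact Or.inr (by omega)
    · exact Or.inl (hc hpar)
  have hsucc : ∀ j < k, pairMonomial P X E k j (j + 1) ∈ J ⊔ I • pairSpan P X E k := by
    intro j
    induction j using Nat.strong_induction_on with
    | _ j ih =>
      intro hj
      obtain ⟨γ, hγJ, hγ⟩ := hrow (j + 1) hj
      refine pairMonomial_mem_of_isPivotRow I hj hj (Ideal.mem_sup_left hγJ) hγ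
        fun c l hl hne hc => ?_
      by_cases hpar : l % 2 = (j + 1) % 2
      · -- the slot `l = j - 1` has a unit coefficient and `M(j, j - 1) = M(j - 1, j)` exactly
        by_cases hlj : l + 1 = j
        · rw [pairMonomial_comm, ← hlj]
          exact Ideal.mul_mem_left _ _ (ih l (by omega) (by omega))
        · exact hterm hj hl (Or.inr (by omega))
      · exact hterm hj hl (Or.inl (hc hpar))
  refine Ideal.span_le.2 ?_
  rintro _ ⟨⟨i, e⟩, ⟨hi, he⟩, rfl⟩
  obtain rfl | rfl : e = 0 ∨ e = 1 := by simp only [Set.mem_Iio] at he; omega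
  · exact hdiag i hi
  · exact hsucc i hi

end PairMonomial

theorem exists_mem_alphaEl_betaEl_isPivotRow {A : Type*} [CommRing A] (p : ℕ) (x : A) {k : ℕ}
    {u C : ℕ → A} {I : Ideal A} (hu : ∀ l ≤ k, IsUnit (u l)) (hC : ∀ l < k, C l ∈ I)
    {j0 : ℕ} (hj0 : j0 ≤ k) :
    ∃ γ ∈ ({alphaEl p x k u C, betaEl p x k u C} : Set A),
      IsPivotRow (p : A) x (slotExp p) k I j0 γ := by
  have hCI : ∀ l, (if l < k then C l else 0) ∈ I := fun l => by
    split_ifs with hl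
    exacts [hC l hl, I.zero_mem]
  rcases Nat.even_or_odd j0 with h | h
  · refine ⟨_, Set.mem_insert _ _, fun l => if Even l then u l else if l < k then C l else 0,
      by simpa [h] using hu j0 hj0, fun l _ hl => ?_, alphaEl_eq_sum p x k u C⟩
    have : ¬Even l := by rw [Nat.even_iff] at h ⊢; omega
    simpa [this] using hCI l
  · refine ⟨_, Set.mem_insert_of_mem _ rfl,
      fun l => if Odd l then u l else if l < k then C l else 0,
      by simpa [h] using hu j0 hj0, fun l _ hl => ?_, betaEl_eq_sum p x k u C⟩
    have : ¬Odd l := by rw [Nat.odd_iff] at h ⊢; omega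
    simpa [this] using hCI l

theorem statement_8_general (p : ℕ) (hp : p.Prime) (hodd : Odd p)
    (A : Type*) [CommRing A] [IsLocalRing A]
    (x : A) (hmax : IsLocalRing.maximalIdeal A = Ideal.span {(p : A), x})
    (k : ℕ) (hk : 1 ≤ k) (u C : ℕ → A)
    (hu : ∀ l ≤ k, IsUnit (u l)) (hC : ∀ l < k, C l ∈ IsLocalRing.maximalIdeal A) :
    Ideal.span {(p : A) ^ (2 * k + 1), x ^ (p ^ k)} ≤
      IsLocalRing.maximalIdeal A * Ideal.span {alphaEl p x k u C, betaEl p x k u C} := by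
  have hp3 : 3 ≤ p := by obtain ⟨t, rfl⟩ := hodd; have := hp.two_le; omega
  have hpm : (p : A) ∈ IsLocalRing.maximalIdeal A := hmax ▸ Ideal.subset_span (by simp)
  have hxm : x ∈ IsLocalRing.maximalIdeal A := hmax ▸ Ideal.subset_span (by simp)
  have hspan := pairSpan_le _ (IsLocalRing.maximalIdeal_le_jacobson ⊥) hxm
    (slotExp_strictConvex hp3) _ fun j0 hj0 =>
      (exists_mem_alphaEl_betaEl_isPivotRow p x hu hC hj0).imp
        fun _ => And.imp_left (Ideal.subset_span ·)
  have hfirst := hspan <| pairMonomial_mem_pairSpan (p : A) x (slotExp p) k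
    (i := 0) (i' := 0) (by omega) le_rfl (by omega)
  have hlast := hspan <| pairMonomial_mem_pairSpan (p : A) x (slotExp p) k
    (i := k - 1) (i' := k - 1 + 1) (by omega) (by omega) le_rfl
  have hexp : slotExp p (k - 1) + slotExp p k < p ^ k := by
    simpa only [Nat.sub_add_cancel hk] using slotExp_add_slotExp_succ_lt hp3 (k - 1)
  rw [Ideal.span_le]
  rintro _ (rfl | rfl)
  · rw [show (p : A) ^ (2 * k + 1) = (p : A) ^ 2 * pairMonomial (p : A) x (slotExp p) k 0 0 by
      simp [pairMonomial, slotExp, ← pow_add]; congr 1; omega]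
    exact Ideal.mul_mem_mul (Ideal.pow_mem_of_mem _ hpm 2 two_pos) hfirst
  · rw [show x ^ p ^ k = x ^ (p ^ k - (slotExp p (k - 1) + slotExp p k)) *
        pairMonomial (p : A) x (slotExp p) k (k - 1) (k - 1 + 1) by
      rw [pairMonomial, Nat.sub_add_cancel hk, show 2 * k - 1 - (k - 1 + k) = 0 by omega,
        pow_zero, one_mul, ← pow_add, Nat.sub_add_cancel hexp.le]]
    exact Ideal.mul_mem_mul (Ideal.pow_mem_of_mem _ hxm _ (by omega)) hlast

/-- abstract form of Lemma 3.3.3 of the paper.  With `p`, `A`, `x`, `k`,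
`u`, `C`, `α`, `β` as in Statement 7, there is an inclusion of ideals
`(p^{2k+1}, x^{p^k}) ⊆ m·(α, β)` in `A`. -/
theorem statement_8 (p : ℕ) (hp : p.Prime) (hodd : Odd p)
    (A : Type*) [CommRing A] [IsNoetherianRing A] [IsLocalRing A]
    (x : A) (hmax : IsLocalRing.maximalIdeal A = Ideal.span {(p : A), x})
    (hdim : ringKrullDim A = 2)
    (k : ℕ) (hk : 1 ≤ k) (u C : ℕ → A)
    (hu : ∀ l ≤ k, IsUnit (u l)) (hC : ∀ l < k, C l ∈ IsLocalRing.maximalIdeal A) :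
    Ideal.span {(p : A) ^ (2 * k + 1), x ^ (p ^ k)} ≤
      IsLocalRing.maximalIdeal A * Ideal.span {alphaEl p x k u C, betaEl p x k u C} :=
  statement_8_general p hp hodd A x hmax k hk u C hu hC
end
end
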